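/- arXiv:2510.04858 — 11 statements merged into one kernel-verified Lean document; each statement's English description precedes it below -/
import Mathlib

section
/- Let Θ be a real n×n matrix and A : ℝ^n → ℝ^n a map such that l_A(x) = x + ΘA(x) is a bijection of ℝ^n with inverse r. Then the map A^{-1} := −A ∘ r is a two-sided inverse of A for the bisection product: (A^{-1} ⋆ A) = 0 and (A ⋆ A^{-1}) = 0 identically. -/
/-- the bisection product `(B ⋆ A)(x) = B(x + ΘA(x)) + A(x)`. -/
noncomputable def bisecMul {n : ℕ} (Θ : Matrix (Fin n) (Fin n) ℝ)
    (B A : (Fin n → ℝ) → (Fin n → ℝ)) : (Fin n → ℝ) → (Fin n → ℝ) :=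
  fun x => B (x + Θ.mulVec (A x)) + A x

theorem stmt_3 {n : ℕ} (Θ : Matrix (Fin n) (Fin n) ℝ)
    (A : (Fin n → ℝ) → (Fin n → ℝ)) (r : (Fin n → ℝ) → (Fin n → ℝ))
    (hbij : Function.Bijective (fun x => x + Θ.mulVec (A x)))
    (hleft : Function.LeftInverse r (fun x => x + Θ.mulVec (A x)))
    (hright : Function.RightInverse r (fun x => x + Θ.mulVec (A x))) :
    bisecMul Θ (fun x => -A (r x)) A = (fun _ => 0) ∧
    bisecMul Θ A (fun x => -A (r x)) = (fun _ => 0) := by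
  constructor
  · funext x
    have h := hleft x
    simp only [bisecMul, h]
    simp
  · funext x
    have h : x + Θ.mulVec (-A (r x)) = r x := by
      have h2 := hright x
      simp only at h2
      rw [Matrix.mulVec_neg]
      have : r x + Θ.mulVec (A (r x)) = x := h2
      rw [← sub_eq_add_neg]; exact sub_eq_of_eq_add this.symm
    simp only [bisecMul, h]
    simp
end

section
/- Let Θ be a real n×n matrix, A, Λ : ℝ^n → ℝ^n maps, and r : ℝ^n → ℝ^n a map satisfying r(x) + ΘΛ(r(x)) = x for all x ∈ ℝ^n. Define the gauge-transformed potential A' = A ⋆ Λ, i.e. A'(x) = Λ(x) + A(x + ΘΛ(x)), and the gauge-transformed point (x',p') = (r(x), p + Λ(r(x))). Then the gauge-invariant coordinates are unchanged: x' + ΘA'(x') = x + ΘA(x) and p' − A'(x') = p − A(x), for all (x,p) ∈ ℝ^{2n}. -/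
theorem stmt_4 {n : ℕ} (Θ : Matrix (Fin n) (Fin n) ℝ)
    (A Λ r : (Fin n → ℝ) → (Fin n → ℝ))
    (hr : ∀ x, r x + Θ.mulVec (Λ (r x)) = x)
    (A' : (Fin n → ℝ) → (Fin n → ℝ))
    (hA' : A' = bisecMul Θ A Λ)
    (hA'eq : ∀ x, A' x = Λ x + A (x + Θ.mulVec (Λ x))) :
    ∀ (x p : Fin n → ℝ),
      (r x + Θ.mulVec (A' (r x)) = x + Θ.mulVec (A x)) ∧
      ((p + Λ (r x)) - A' (r x) = p - A x) := by
  intro x p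
  have h1 : A' (r x) = Λ (r x) + A x := by
    rw [hA'eq, hr]
  constructor
  · rw [h1, Matrix.mulVec_add, ← add_assoc, hr]
  · rw [h1]; abel
end

section
/- Let Θ be an antisymmetric real n×n matrix and A : ℝ^n → ℝ^n smooth. Equip ℝ^{2n} with the constant-Θ Poisson bracket and set y^i(x,p) = x^i + Σ_j Θ^{ij}A_j(x) and π_a(x,p) = p_a − A_a(x). Let M(x) be the matrix with entries M_{ij}(x) = ∂A_j/∂x^i, J = I − M Θ, K = I − Θ M, and F = M − Mᵀ + Mᵀ Θ M. Then for all (x,p): {y^i, y^j} = (Jᵀ Θ J)^{ij}(x), {y^i, π_b} = (Jᵀ K)^i_b(x), and {π_a, π_b} = F_{ab}(x). -/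
open scoped BigOperators
open Matrix

/-- partial derivative w.r.t. `x^i` (first factor of `ℝ^n × ℝ^n`). -/
noncomputable def pdx {n : ℕ} (i : Fin n) (f : (Fin n → ℝ) × (Fin n → ℝ) → ℝ)
    (z : (Fin n → ℝ) × (Fin n → ℝ)) : ℝ :=
  fderiv ℝ f z (Pi.single i 1, 0)

/-- partial derivative w.r.t. `p_i` (second factor of `ℝ^n × ℝ^n`). -/
noncomputable def pdp {n : ℕ} (i : Fin n) (f : (Fin n → ℝ) × (Fin n → ℝ) → ℝ)
    (z : (Fin n → ℝ) × (Fin n → ℝ)) : ℝ :=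
  fderiv ℝ f z (0, Pi.single i 1)

/-- the constant-Θ Poisson bracket on `ℝ^{2n}`. -/
noncomputable def thetaBracket {n : ℕ} (Θ : Matrix (Fin n) (Fin n) ℝ)
    (f g : (Fin n → ℝ) × (Fin n → ℝ) → ℝ) (z : (Fin n → ℝ) × (Fin n → ℝ)) : ℝ :=
  (∑ i, ∑ j, Θ i j * pdx i f z * pdx j g z) +
    ∑ i, (pdx i f z * pdp i g z - pdp i f z * pdx i g z)

/-- `y^i(x,p) = x^i + Σ_j Θ^{ij} A_j(x)`. -/
noncomputable def yCoord {n : ℕ} (Θ : Matrix (Fin n) (Fin n) ℝ)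
    (A : (Fin n → ℝ) → (Fin n → ℝ)) (i : Fin n)
    (z : (Fin n → ℝ) × (Fin n → ℝ)) : ℝ :=
  z.1 i + ∑ j, Θ i j * A z.1 j

/-- `π_a(x,p) = p_a − A_a(x)`. -/
def piCoord {n : ℕ} (A : (Fin n → ℝ) → (Fin n → ℝ)) (a : Fin n)
    (z : (Fin n → ℝ) × (Fin n → ℝ)) : ℝ :=
  z.2 a - A z.1 a

/-- the Jacobian matrix `M_{ij}(x) = ∂A_j/∂x^i`. -/
noncomputable def jacA {n : ℕ} (A : (Fin n → ℝ) → (Fin n → ℝ)) (x : Fin n → ℝ) :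
    Matrix (Fin n) (Fin n) ℝ :=
  fun i j => fderiv ℝ (fun x => A x j) x (Pi.single i 1)

/-- `J = I − MΘ`. -/
noncomputable def Jmat {n : ℕ} (Θ : Matrix (Fin n) (Fin n) ℝ)
    (A : (Fin n → ℝ) → (Fin n → ℝ)) (x : Fin n → ℝ) : Matrix (Fin n) (Fin n) ℝ :=
  1 - jacA A x * Θ

/-- `K = I − ΘM`. -/
noncomputable def Kmat {n : ℕ} (Θ : Matrix (Fin n) (Fin n) ℝ)
    (A : (Fin n → ℝ) → (Fin n → ℝ)) (x : Fin n → ℝ) : Matrix (Fin n) (Fin n) ℝ :=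
  1 - Θ * jacA A x

/-- `F = M − Mᵀ + Mᵀ Θ M`. -/
noncomputable def Fmat {n : ℕ} (Θ : Matrix (Fin n) (Fin n) ℝ)
    (A : (Fin n → ℝ) → (Fin n → ℝ)) (x : Fin n → ℝ) : Matrix (Fin n) (Fin n) ℝ :=
  jacA A x - (jacA A x)ᵀ + (jacA A x)ᵀ * Θ * jacA A x

section aux
variable {n : ℕ}

lemma diffA {A : (Fin n → ℝ) → (Fin n → ℝ)} (hA : ContDiff ℝ (⊤ : ℕ∞) A) (j : Fin n) :
    Differentiable ℝ fun x => A x j :=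
  differentiable_pi.mp (hA.differentiable (by simp)) j

lemma fderiv_comp_fst {f : (Fin n → ℝ) → ℝ} (hf : Differentiable ℝ f)
    (z v : (Fin n → ℝ) × (Fin n → ℝ)) :
    fderiv ℝ (fun z : (Fin n → ℝ) × (Fin n → ℝ) => f z.1) z v = fderiv ℝ f z.1 v.1 := by
  have h : (fun z : (Fin n → ℝ) × (Fin n → ℝ) => f z.1) = f ∘ Prod.fst := rfl
  rw [h, fderiv_comp z (hf z.1) differentiableAt_fst]
  simp [fderiv_fst]

lemma fderiv_y {Θ : Matrix (Fin n) (Fin n) ℝ}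
    {A : (Fin n → ℝ) → (Fin n → ℝ)} (hA : ContDiff ℝ (⊤ : ℕ∞) A) (i : Fin n)
    (z v : (Fin n → ℝ) × (Fin n → ℝ)) :
    fderiv ℝ (yCoord Θ A i) z v = v.1 i + ∑ j, Θ i j * fderiv ℝ (fun x => A x j) z.1 v.1 := by
  have hd : ∀ j : Fin n, DifferentiableAt ℝ (fun z : (Fin n → ℝ) × (Fin n → ℝ) => A z.1 j) z :=
    fun j => ((diffA hA j) z.1).comp z differentiableAt_fst
  have L1 : DifferentiableAt ℝ (fun z : (Fin n → ℝ) × (Fin n → ℝ) => z.1 i) z :=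
    ((ContinuousLinearMap.proj i).comp
      (ContinuousLinearMap.fst ℝ (Fin n → ℝ) (Fin n → ℝ))).differentiableAt
  have hsum : DifferentiableAt ℝ
      (fun z : (Fin n → ℝ) × (Fin n → ℝ) => ∑ j, Θ i j * A z.1 j) z :=
    DifferentiableAt.fun_sum fun j _ => (hd j).const_mul _
  unfold yCoord
  rw [fderiv_fun_add L1 hsum, ContinuousLinearMap.add_apply]
  congr 1
  · have : (fun z : (Fin n → ℝ) × (Fin n → ℝ) => z.1 i) =
      ((ContinuousLinearMap.proj i).comp
        (ContinuousLinearMap.fst ℝ (Fin n → ℝ) (Fin n → ℝ)) :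
        (Fin n → ℝ) × (Fin n → ℝ) →L[ℝ] ℝ) := rfl
    rw [this, ContinuousLinearMap.fderiv]
    rfl
  · rw [fderiv_fun_sum fun j _ => (hd j).const_mul _, ContinuousLinearMap.sum_apply]
    refine Finset.sum_congr rfl fun j _ => ?_
    rw [fderiv_const_mul (hd j), ContinuousLinearMap.smul_apply]
    rw [fderiv_comp_fst (diffA hA j) z v]
    simp

lemma fderiv_pi' {A : (Fin n → ℝ) → (Fin n → ℝ)} (hA : ContDiff ℝ (⊤ : ℕ∞) A) (a : Fin n)
    (z v : (Fin n → ℝ) × (Fin n → ℝ)) :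
    fderiv ℝ (piCoord A a) z v = v.2 a - fderiv ℝ (fun x => A x a) z.1 v.1 := by
  have hd : DifferentiableAt ℝ (fun z : (Fin n → ℝ) × (Fin n → ℝ) => A z.1 a) z :=
    ((diffA hA a) z.1).comp z differentiableAt_fst
  have L2 : DifferentiableAt ℝ (fun z : (Fin n → ℝ) × (Fin n → ℝ) => z.2 a) z :=
    ((ContinuousLinearMap.proj a).comp
      (ContinuousLinearMap.snd ℝ (Fin n → ℝ) (Fin n → ℝ))).differentiableAt
  unfold piCoord
  rw [fderiv_fun_sub L2 hd, ContinuousLinearMap.sub_apply]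
  congr 1
  · have : (fun z : (Fin n → ℝ) × (Fin n → ℝ) => z.2 a) =
      ((ContinuousLinearMap.proj a).comp
        (ContinuousLinearMap.snd ℝ (Fin n → ℝ) (Fin n → ℝ)) :
        (Fin n → ℝ) × (Fin n → ℝ) →L[ℝ] ℝ) := rfl
    rw [this, ContinuousLinearMap.fderiv]
    rfl
  · exact fderiv_comp_fst (diffA hA a) z v

end aux

section aux2
variable {n : ℕ}

lemma pdx_y {Θ : Matrix (Fin n) (Fin n) ℝ} (hΘ : ∀ i j, Θ i j = -Θ j i)
    {A : (Fin n → ℝ) → (Fin n → ℝ)} (hA : ContDiff ℝ (⊤ : ℕ∞) A) (i k : Fin n)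
    (z : (Fin n → ℝ) × (Fin n → ℝ)) :
    pdx k (yCoord Θ A i) z = Jmat Θ A z.1 k i := by
  unfold pdx
  rw [fderiv_y hA]
  have h : ∀ j, Θ j i = -Θ i j := fun j => hΘ j i
  simp only [Jmat, jacA, Matrix.sub_apply, Matrix.mul_apply, Matrix.one_apply,
    Pi.single_apply, h, mul_neg, Finset.sum_neg_distrib, sub_neg_eq_add]
  congr 1
  · simp [eq_comm]
  · exact Finset.sum_congr rfl fun j _ => mul_comm _ _

lemma pdp_y {Θ : Matrix (Fin n) (Fin n) ℝ}
    {A : (Fin n → ℝ) → (Fin n → ℝ)} (hA : ContDiff ℝ (⊤ : ℕ∞) A) (i k : Fin n)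
    (z : (Fin n → ℝ) × (Fin n → ℝ)) :
    pdp k (yCoord Θ A i) z = 0 := by
  unfold pdp
  rw [fderiv_y hA]
  simp

lemma pdx_pi {A : (Fin n → ℝ) → (Fin n → ℝ)} (hA : ContDiff ℝ (⊤ : ℕ∞) A) (a k : Fin n)
    (z : (Fin n → ℝ) × (Fin n → ℝ)) :
    pdx k (piCoord A a) z = -(jacA A z.1 k a) := by
  unfold pdx
  rw [fderiv_pi' hA]
  simp [jacA]

lemma pdp_pi {A : (Fin n → ℝ) → (Fin n → ℝ)} (hA : ContDiff ℝ (⊤ : ℕ∞) A) (a k : Fin n)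
    (z : (Fin n → ℝ) × (Fin n → ℝ)) :
    pdp k (piCoord A a) z = if a = k then 1 else 0 := by
  unfold pdp
  rw [fderiv_pi' hA]
  simp [Pi.single_apply]

end aux2

theorem stmt_5 {n : ℕ} (Θ : Matrix (Fin n) (Fin n) ℝ)
    (hΘ : ∀ i j, Θ i j = -Θ j i)
    (A : (Fin n → ℝ) → (Fin n → ℝ)) (hA : ContDiff ℝ (⊤ : ℕ∞) A) :
    ∀ (z : (Fin n → ℝ) × (Fin n → ℝ)),
      (∀ i j, thetaBracket Θ (yCoord Θ A i) (yCoord Θ A j) z =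
        ((Jmat Θ A z.1)ᵀ * Θ * Jmat Θ A z.1) i j) ∧
      (∀ i b, thetaBracket Θ (yCoord Θ A i) (piCoord A b) z =
        ((Jmat Θ A z.1)ᵀ * Kmat Θ A z.1) i b) ∧
      (∀ a b, thetaBracket Θ (piCoord A a) (piCoord A b) z =
        Fmat Θ A z.1 a b) := by
  intro z
  set J := Jmat Θ A z.1 with hJ
  set M := jacA A z.1 with hM
  refine ⟨fun i j => ?_, fun i b => ?_, fun a b => ?_⟩
  · unfold thetaBracket
    simp only [pdx_y hΘ hA, pdp_y hA, mul_zero, zero_mul, sub_zero,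
      Finset.sum_const_zero, add_zero]
    simp only [Matrix.mul_apply, Matrix.transpose_apply, Finset.sum_mul]
    rw [Finset.sum_comm]
    exact Finset.sum_congr rfl fun l _ => Finset.sum_congr rfl fun k _ => by ring
  · unfold thetaBracket
    simp only [pdx_y hΘ hA, pdp_y hA, pdx_pi hA, pdp_pi hA, zero_mul, mul_zero,
      sub_zero, mul_ite, mul_one, ← hM, ← hJ]
    rw [Finset.sum_ite_eq Finset.univ b fun k => J k i]
    simp only [Finset.mem_univ, if_true]
    have hK : (Jᵀ * Kmat Θ A z.1) i b = J b i - ∑ l, ∑ k, (J k i * Θ k l) * M l b := by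
      unfold Kmat
      rw [← hM, Matrix.mul_sub, Matrix.mul_one, Matrix.sub_apply,
        Matrix.transpose_apply]
      congr 1
      rw [← Matrix.mul_assoc]
      simp only [Matrix.mul_apply, Matrix.transpose_apply, Finset.sum_mul]
    rw [hK, Finset.sum_comm, sub_eq_add_neg, add_comm]
    congr 1
    rw [← Finset.sum_neg_distrib]
    refine Finset.sum_congr rfl fun l _ => ?_
    rw [← Finset.sum_neg_distrib]
    exact Finset.sum_congr rfl fun k _ => by ring
  · unfold thetaBracket
    simp only [pdx_pi hA, pdp_pi hA, mul_ite, ite_mul, mul_one, one_mul, mul_zero,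
      zero_mul, ← hM]
    have h3 : ∑ k, ∑ l, Θ k l * -(M k a) * -(M l b) = (Mᵀ * Θ * M) a b := by
      simp only [Matrix.mul_apply, Matrix.transpose_apply, Finset.sum_mul]
      rw [Finset.sum_comm]
      exact Finset.sum_congr rfl fun l _ => Finset.sum_congr rfl fun k _ => by ring
    rw [h3]
    rw [Finset.sum_sub_distrib, Finset.sum_ite_eq Finset.univ b fun k => -(M k a),
      Finset.sum_ite_eq Finset.univ a fun k => -(M k b)]
    simp only [Finset.mem_univ, if_true, Fmat, ← hM, Matrix.add_apply,
      Matrix.sub_apply, Matrix.transpose_apply]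
    ring
end

section
/- Let Θ be an antisymmetric real n×n matrix and M a real n×n matrix. Set F = M − Mᵀ + Mᵀ Θ M, F^s = M − Mᵀ + M Θ Mᵀ and J = I − M Θ. Assume J and I − Θ F are invertible, and put G = J^{-1} F^s (J^{-1})ᵀ. Then G = F (I − Θ F)^{-1}, the matrix I + G Θ is invertible, and F = (I + G Θ)^{-1} G. -/
/-! With `K = 1 - Θ M`, one checks by expanding that `Fs K = J F` and, using `Θᵀ = -Θ`,
`Jᵀ K = 1 - Θ F`. Hence `G (1 - Θ F) = J⁻¹ Fs (J⁻¹)ᵀ Jᵀ K = J⁻¹ J F = F`, which gives the first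
claim. The same identity reads `(1 + G Θ) F = G`, and it makes `1 - F Θ` a right inverse of
`1 + G Θ`. -/

open Matrix

section Ring

variable {R : Type*} [Ring R]

theorem sub_add_mul_mul_mul_one_sub_mul (a b c : R) :
    (a - c + a * b * c) * (1 - b * a) = (1 - a * b) * (a - c + c * b * a) := by
  noncomm_ring

theorem one_add_mul_mul_one_sub_mul (a b c : R) :
    (1 + b * c) * (1 - b * a) = 1 - b * (a - c + c * b * a) := by
  noncomm_ring

variable {a b g : R}

theorem one_add_mul_mul_of_mul_one_sub_mul_eq (h : g * (1 - b * a) = a) :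
    (1 + g * b) * a = g := by
  linear_combination (norm := noncomm_ring) -h

theorem one_add_mul_mul_one_sub_mul_of_mul_one_sub_mul_eq (h : g * (1 - b * a) = a) :
    (1 + g * b) * (1 - a * b) = 1 := by
  linear_combination (norm := noncomm_ring) h * b

end Ring

section Matrix

variable {n R : Type*} [Fintype n] [DecidableEq n] [CommRing R]

theorem transpose_one_sub_mul_of_transpose_eq_neg {Θ : Matrix n n R} (hΘ : Θᵀ = -Θ)
    (M : Matrix n n R) : (1 - M * Θ)ᵀ = 1 + Θ * Mᵀ := by
  rw [transpose_sub, transpose_one, transpose_mul, hΘ, neg_mul, sub_neg_eq_add]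

theorem mul_one_sub_mul_eq_of_transpose_eq_neg {Θ M F Fs J G : Matrix n n R}
    (hΘ : Θᵀ = -Θ) (hF : F = M - Mᵀ + Mᵀ * Θ * M) (hFs : Fs = M - Mᵀ + M * Θ * Mᵀ)
    (hJ : J = 1 - M * Θ) (hJinv : IsUnit J) (hG : G = J⁻¹ * Fs * (J⁻¹)ᵀ) :
    G * (1 - Θ * F) = F := by
  have hJdet : IsUnit J.det := (isUnit_iff_isUnit_det J).mp hJinv
  have hFsJ : Fs * (1 - Θ * M) = J * F := by
    rw [hFs, hF, hJ, sub_add_mul_mul_mul_one_sub_mul]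
  have hJT : 1 - Θ * F = Jᵀ * (1 - Θ * M) := by
    rw [hJ, transpose_one_sub_mul_of_transpose_eq_neg hΘ, one_add_mul_mul_one_sub_mul, hF]
  calc G * (1 - Θ * F) = J⁻¹ * Fs * (J * J⁻¹)ᵀ * (1 - Θ * M) := by
        rw [hG, hJT, transpose_mul]; simp only [Matrix.mul_assoc]
    _ = J⁻¹ * (J * F) := by
        rw [mul_nonsing_inv _ hJdet, transpose_one, Matrix.mul_one, Matrix.mul_assoc, hFsJ]
    _ = F := nonsing_inv_mul_cancel_left _ _ hJdet

end Matrix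

theorem stmt_7 {n : ℕ} (Θ M : Matrix (Fin n) (Fin n) ℝ)
    (hΘ : Θᵀ = -Θ)
    (F Fs J G : Matrix (Fin n) (Fin n) ℝ)
    (hF : F = M - Mᵀ + Mᵀ * Θ * M)
    (hFs : Fs = M - Mᵀ + M * Θ * Mᵀ)
    (hJ : J = 1 - M * Θ)
    (hJinv : IsUnit J) (hinv : IsUnit (1 - Θ * F))
    (hG : G = J⁻¹ * Fs * (J⁻¹)ᵀ) :
    G = F * (1 - Θ * F)⁻¹ ∧ IsUnit (1 + G * Θ) ∧ F = (1 + G * Θ)⁻¹ * G := by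
  have hGF : G * (1 - Θ * F) = F :=
    mul_one_sub_mul_eq_of_transpose_eq_neg hΘ hF hFs hJ hJinv hG
  have hright : (1 + G * Θ) * (1 - F * Θ) = 1 :=
    one_add_mul_mul_one_sub_mul_of_mul_one_sub_mul_eq hGF
  have hdet : IsUnit (1 + G * Θ).det := isUnit_det_of_right_inverse hright
  refine ⟨?_, (isUnit_iff_isUnit_det _).mpr hdet, ?_⟩
  · calc G = G * (1 - Θ * F) * (1 - Θ * F)⁻¹ :=
          (mul_nonsing_inv_cancel_right _ _ ((isUnit_iff_isUnit_det _).mp hinv)).symm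
      _ = F * (1 - Θ * F)⁻¹ := by rw [hGF]
  · calc F = (1 + G * Θ)⁻¹ * ((1 + G * Θ) * F) := (nonsing_inv_mul_cancel_left _ _ hdet).symm
      _ = (1 + G * Θ)⁻¹ * G := by rw [one_add_mul_mul_of_mul_one_sub_mul_eq hGF]
end

section
/- Let Θ be an antisymmetric real n×n matrix and M a real n×n matrix such that I − M Θ is invertible. Set F = M − Mᵀ + Mᵀ Θ M and F^s = M − Mᵀ + M Θ Mᵀ. Then F = 0 if and only if F^s = 0. -/
open Matrix

theorem stmt_8 {n : ℕ} (Θ M : Matrix (Fin n) (Fin n) ℝ)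
    (hΘ : Θᵀ = -Θ) (hJ : IsUnit (1 - M * Θ)) :
    M - Mᵀ + Mᵀ * Θ * M = 0 ↔ M - Mᵀ + M * Θ * Mᵀ = 0 := by
  have hJ' : IsUnit (1 - Θ * M) := by
    rw [Matrix.isUnit_iff_isUnit_det]
    rw [show (1 : Matrix (Fin n) (Fin n) ℝ) - Θ * M = 1 + Θ * (-M) by noncomm_ring]
    rw [Matrix.det_one_add_mul_comm]
    rw [show (1 : Matrix (Fin n) (Fin n) ℝ) + (-M) * Θ = 1 - M * Θ by noncomm_ring]
    exact (Matrix.isUnit_iff_isUnit_det _).mp hJ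
  have key : (M - Mᵀ + M * Θ * Mᵀ) * (1 - Θ * M)
      = (1 - M * Θ) * (M - Mᵀ + Mᵀ * Θ * M) := by noncomm_ring
  constructor
  · intro h
    have h2 : (M - Mᵀ + M * Θ * Mᵀ) * (1 - Θ * M) = 0 * (1 - Θ * M) := by
      rw [key, h, mul_zero, zero_mul]
    exact hJ'.mul_right_cancel h2
  · intro h
    have h2 : (1 - M * Θ) * (M - Mᵀ + Mᵀ * Θ * M) = (1 - M * Θ) * 0 := by
      rw [← key, h, zero_mul, mul_zero]
    exact hJ.mul_left_cancel h2
end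

section
/- Let f^{ab}_c be real constants antisymmetric in the upper indices (f^{ab}_c = −f^{ba}_c) and γ : ℝ^n → M_n(ℝ) a smooth matrix-valued map. Define on smooth functions on ℝ^{2n} (coordinates (x,p)) the bracket {F,G} = Σ f^{ab}_c x^c ∂F/∂x^a · ∂G/∂x^b + Σ γ^a_b(p) (∂F/∂x^a · ∂G/∂p_b − ∂F/∂p_b · ∂G/∂x^a). Then for all indices a,b,m and all (x,p), the Jacobi sum {x^a,{x^b,p_m}} + {x^b,{p_m,x^a}} + {p_m,{x^a,x^b}} equals γ^a_k(p) ∂γ^b_m/∂p_k − γ^b_k(p) ∂γ^a_m/∂p_k − f^{ab}_k γ^k_m(p). In particular, this Jacobi sum vanishes identically for all a,b,m if and only if γ satisfies the first master equation γ^a_k ∂_p^k γ^b_m − γ^b_k ∂_p^k γ^a_m − γ^k_m f^{ab}_k = 0. -/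
open scoped BigOperators

/-- partial derivative `∂_p^k` of a function of `p` alone. -/
noncomputable def pd {n : ℕ} (k : Fin n) (h : (Fin n → ℝ) → ℝ) (p : Fin n → ℝ) : ℝ :=
  fderiv ℝ h p (Pi.single k 1)

/-- the bracket
`{F,G} = Σ f^{ab}_c x^c ∂F/∂x^a ∂G/∂x^b + Σ γ^a_b(p)(∂F/∂x^a ∂G/∂p_b − ∂F/∂p_b ∂G/∂x^a)`. -/
noncomputable def linBracket {n : ℕ} (f : Fin n → Fin n → Fin n → ℝ)
    (γ : (Fin n → ℝ) → Matrix (Fin n) (Fin n) ℝ)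
    (F G : (Fin n → ℝ) × (Fin n → ℝ) → ℝ) (z : (Fin n → ℝ) × (Fin n → ℝ)) : ℝ :=
  (∑ a, ∑ b, ∑ c, f a b c * z.1 c * pdx a F z * pdx b G z) +
    ∑ a, ∑ b, γ z.2 a b * (pdx a F z * pdp b G z - pdp b F z * pdx a G z)

/-- the coordinate function `x^a`. -/
def xC {n : ℕ} (a : Fin n) (z : (Fin n → ℝ) × (Fin n → ℝ)) : ℝ := z.1 a

/-- the coordinate function `p_m`. -/
def pC {n : ℕ} (m : Fin n) (z : (Fin n → ℝ) × (Fin n → ℝ)) : ℝ := z.2 m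

section Aux
variable {n : ℕ}

lemma hasF_xC (a : Fin n) (z : (Fin n → ℝ) × (Fin n → ℝ)) :
    HasFDerivAt (xC a)
      ((ContinuousLinearMap.proj a).comp (ContinuousLinearMap.fst ℝ (Fin n → ℝ) (Fin n → ℝ))) z :=
  ((ContinuousLinearMap.proj a).comp (ContinuousLinearMap.fst ℝ (Fin n → ℝ) (Fin n → ℝ))).hasFDerivAt

lemma pdx_xC (i a : Fin n) (z : (Fin n → ℝ) × (Fin n → ℝ)) :
    pdx i (xC a) z = if a = i then 1 else 0 := by
  rw [pdx, (hasF_xC a z).fderiv]; simp [Pi.single_apply]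

lemma pdp_xC (i a : Fin n) (z : (Fin n → ℝ) × (Fin n → ℝ)) :
    pdp i (xC a) z = 0 := by
  rw [pdp, (hasF_xC a z).fderiv]; simp

lemma hasF_pC (m : Fin n) (z : (Fin n → ℝ) × (Fin n → ℝ)) :
    HasFDerivAt (pC m)
      ((ContinuousLinearMap.proj m).comp (ContinuousLinearMap.snd ℝ (Fin n → ℝ) (Fin n → ℝ))) z :=
  ((ContinuousLinearMap.proj m).comp (ContinuousLinearMap.snd ℝ (Fin n → ℝ) (Fin n → ℝ))).hasFDerivAt

lemma pdx_pC (i m : Fin n) (z : (Fin n → ℝ) × (Fin n → ℝ)) :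
    pdx i (pC m) z = 0 := by
  rw [pdx, (hasF_pC m z).fderiv]; simp

lemma pdp_pC (i m : Fin n) (z : (Fin n → ℝ) × (Fin n → ℝ)) :
    pdp i (pC m) z = if m = i then 1 else 0 := by
  rw [pdp, (hasF_pC m z).fderiv]; simp [Pi.single_apply]

lemma hasF_comp_snd (g : (Fin n → ℝ) → ℝ) (hg : Differentiable ℝ g)
    (z : (Fin n → ℝ) × (Fin n → ℝ)) :
    HasFDerivAt (fun z : (Fin n → ℝ) × (Fin n → ℝ) => g z.2)
      ((fderiv ℝ g z.2).comp (ContinuousLinearMap.snd ℝ (Fin n → ℝ) (Fin n → ℝ))) z :=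
  ((hg z.2).hasFDerivAt).comp z (hasFDerivAt_snd)

lemma pdx_comp_snd (g : (Fin n → ℝ) → ℝ) (hg : Differentiable ℝ g) (i : Fin n)
    (z : (Fin n → ℝ) × (Fin n → ℝ)) :
    pdx i (fun z : (Fin n → ℝ) × (Fin n → ℝ) => g z.2) z = 0 := by
  rw [pdx, (hasF_comp_snd g hg z).fderiv]; simp

lemma pdp_comp_snd (g : (Fin n → ℝ) → ℝ) (hg : Differentiable ℝ g) (i : Fin n)
    (z : (Fin n → ℝ) × (Fin n → ℝ)) :
    pdp i (fun z : (Fin n → ℝ) × (Fin n → ℝ) => g z.2) z = pd i g z.2 := by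
  rw [pdp, (hasF_comp_snd g hg z).fderiv]; simp [pd]

lemma hasF_lin (c : Fin n → ℝ) (z : (Fin n → ℝ) × (Fin n → ℝ)) :
    HasFDerivAt (fun z : (Fin n → ℝ) × (Fin n → ℝ) => ∑ j, c j * z.1 j)
      ((∑ j, c j • ((ContinuousLinearMap.proj j).comp
        (ContinuousLinearMap.fst ℝ (Fin n → ℝ) (Fin n → ℝ)))) :
        ((Fin n → ℝ) × (Fin n → ℝ)) →L[ℝ] ℝ) z := by
  have : ∀ j : Fin n, HasFDerivAt (fun z : (Fin n → ℝ) × (Fin n → ℝ) => c j * z.1 j)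
      (c j • ((ContinuousLinearMap.proj j).comp
        (ContinuousLinearMap.fst ℝ (Fin n → ℝ) (Fin n → ℝ)))) z := fun j =>
    (hasF_xC j z).const_mul (c j)
  simpa using HasFDerivAt.fun_sum (fun j _ => this j)

lemma pdx_lin (c : Fin n → ℝ) (i : Fin n) (z : (Fin n → ℝ) × (Fin n → ℝ)) :
    pdx i (fun z : (Fin n → ℝ) × (Fin n → ℝ) => ∑ j, c j * z.1 j) z = c i := by
  rw [pdx, (hasF_lin c z).fderiv]; simp [Pi.single_apply, mul_ite]

lemma pdp_lin (c : Fin n → ℝ) (i : Fin n) (z : (Fin n → ℝ) × (Fin n → ℝ)) :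
    pdp i (fun z : (Fin n → ℝ) × (Fin n → ℝ) => ∑ j, c j * z.1 j) z = 0 := by
  rw [pdp, (hasF_lin c z).fderiv]; simp

variable (f : Fin n → Fin n → Fin n → ℝ) (γ : (Fin n → ℝ) → Matrix (Fin n) (Fin n) ℝ)

lemma inner1 (b m : Fin n) :
    linBracket f γ (xC b) (pC m) = fun z => γ z.2 b m := by
  funext z
  simp [linBracket, pdx_xC, pdp_xC, pdx_pC, pdp_pC, mul_ite, ite_mul,
    Finset.sum_ite_eq, Finset.sum_ite_eq']

lemma inner2 (a m : Fin n) :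
    linBracket f γ (pC m) (xC a) = fun z => -(γ z.2 a m) := by
  funext z
  simp [linBracket, pdx_xC, pdp_xC, pdx_pC, pdp_pC, mul_ite, ite_mul,
    Finset.sum_ite_eq, Finset.sum_ite_eq']

lemma inner3 (a b : Fin n) :
    linBracket f γ (xC a) (xC b) = fun z => ∑ c, f a b c * z.1 c := by
  funext z
  simp [linBracket, pdx_xC, pdp_xC, mul_ite, ite_mul,
    Finset.sum_ite_eq, Finset.sum_ite_eq', mul_comm]

lemma outer1 (a b m : Fin n) (hγ : Differentiable ℝ fun p => γ p b m)
    (z : (Fin n → ℝ) × (Fin n → ℝ)) :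
    linBracket f γ (xC a) (fun z => γ z.2 b m) z
      = ∑ k, γ z.2 a k * pd k (fun p => γ p b m) z.2 := by
  simp [linBracket, pdx_xC, pdp_xC,
    pdx_comp_snd (fun p => γ p b m) hγ, pdp_comp_snd (fun p => γ p b m) hγ,
    mul_ite, ite_mul, Finset.sum_ite_eq, Finset.sum_ite_eq']

lemma outer2 (a b m : Fin n) (hγ : Differentiable ℝ fun p => γ p a m)
    (z : (Fin n → ℝ) × (Fin n → ℝ)) :
    linBracket f γ (xC b) (fun z => -(γ z.2 a m)) z
      = -∑ k, γ z.2 b k * pd k (fun p => γ p a m) z.2 := by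
  have h1 : ∀ i (z : (Fin n → ℝ) × (Fin n → ℝ)),
      pdx i (fun z : (Fin n → ℝ) × (Fin n → ℝ) => -(γ z.2 a m)) z = 0 := by
    intro i z
    rw [show (fun z : (Fin n → ℝ) × (Fin n → ℝ) => -(γ z.2 a m))
      = fun z : (Fin n → ℝ) × (Fin n → ℝ) => (fun p => -(γ p a m)) z.2 from rfl]
    exact pdx_comp_snd _ hγ.neg i z
  have h2 : ∀ i (z : (Fin n → ℝ) × (Fin n → ℝ)),
      pdp i (fun z : (Fin n → ℝ) × (Fin n → ℝ) => -(γ z.2 a m)) z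
        = -pd i (fun p => γ p a m) z.2 := by
    intro i z
    rw [show (fun z : (Fin n → ℝ) × (Fin n → ℝ) => -(γ z.2 a m))
      = fun z : (Fin n → ℝ) × (Fin n → ℝ) => (fun p => -(γ p a m)) z.2 from rfl]
    rw [pdp_comp_snd (fun p => -(γ p a m)) hγ.neg i z, pd, pd, fderiv_fun_neg]
    simp
  simp [linBracket, pdx_xC, pdp_xC, h1, h2, mul_ite, ite_mul,
    Finset.sum_ite_eq, Finset.sum_ite_eq', Finset.mul_sum, Finset.sum_neg_distrib]

lemma outer3 (a b m : Fin n) (z : (Fin n → ℝ) × (Fin n → ℝ)) :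
    linBracket f γ (pC m) (fun z => ∑ c, f a b c * z.1 c) z
      = -∑ k, f a b k * γ z.2 k m := by
  simp [linBracket, pdx_pC, pdp_pC, pdx_lin (fun c => f a b c), pdp_lin (fun c => f a b c),
    mul_ite, ite_mul, Finset.sum_ite_eq, Finset.sum_ite_eq', mul_comm]

end Aux

theorem stmt_10 {n : ℕ} (f : Fin n → Fin n → Fin n → ℝ)
    (hf : ∀ a b c, f a b c = -f b a c)
    (γ : (Fin n → ℝ) → Matrix (Fin n) (Fin n) ℝ)
    (hγ : ∀ a b, ContDiff ℝ (⊤ : ℕ∞) fun p => γ p a b) :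
    (∀ (a b m : Fin n) (z : (Fin n → ℝ) × (Fin n → ℝ)),
      linBracket f γ (xC a) (linBracket f γ (xC b) (pC m)) z +
      linBracket f γ (xC b) (linBracket f γ (pC m) (xC a)) z +
      linBracket f γ (pC m) (linBracket f γ (xC a) (xC b)) z =
        (∑ k, γ z.2 a k * pd k (fun p => γ p b m) z.2) -
        (∑ k, γ z.2 b k * pd k (fun p => γ p a m) z.2) -
        ∑ k, f a b k * γ z.2 k m) ∧
    ((∀ (a b m : Fin n) (z : (Fin n → ℝ) × (Fin n → ℝ)),
      linBracket f γ (xC a) (linBracket f γ (xC b) (pC m)) z +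
      linBracket f γ (xC b) (linBracket f γ (pC m) (xC a)) z +
      linBracket f γ (pC m) (linBracket f γ (xC a) (xC b)) z = 0) ↔
      (∀ (a b m : Fin n) (p : Fin n → ℝ),
        (∑ k, γ p a k * pd k (fun q => γ q b m) p) -
        (∑ k, γ p b k * pd k (fun q => γ q a m) p) -
        ∑ k, f a b k * γ p k m = 0)) := by
  have key : ∀ (a b m : Fin n) (z : (Fin n → ℝ) × (Fin n → ℝ)),
      linBracket f γ (xC a) (linBracket f γ (xC b) (pC m)) z +
      linBracket f γ (xC b) (linBracket f γ (pC m) (xC a)) z +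
      linBracket f γ (pC m) (linBracket f γ (xC a) (xC b)) z =
        (∑ k, γ z.2 a k * pd k (fun p => γ p b m) z.2) -
        (∑ k, γ z.2 b k * pd k (fun p => γ p a m) z.2) -
        ∑ k, f a b k * γ z.2 k m := by
    intro a b m z
    rw [inner1 f γ b m, inner2 f γ a m, inner3 f γ a b,
      outer1 f γ a b m ((hγ b m).differentiable (by simp)) z,
      outer2 f γ a b m ((hγ a m).differentiable (by simp)) z,
      outer3 f γ a b m z]
    ring
  refine ⟨key, ?_⟩
  constructor
  · intro h a b m p
    have := h a b m (0, p)
    rwa [key a b m (0, p)] at this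
  · intro h a b m z
    rw [key a b m z]
    exact h a b m z.2
end

section
/- Let f^{ab}_c be real constants antisymmetric in the upper indices (f^{ab}_c = −f^{ba}_c) and let γ : ℝ^n → GL_n(ℝ) be a smooth map satisfying the first master equation γ^a_k ∂_p^k γ^b_m − γ^b_k ∂_p^k γ^a_m − γ^k_m f^{ab}_k = 0 everywhere. Then the pointwise inverse γ̄ = γ^{-1} satisfies the dual (Maurer–Cartan) equation ∂_p^j γ̄^i_a − ∂_p^i γ̄^j_a + γ̄^j_k f^{kl}_a γ̄^i_l = 0 everywhere. -/
open scoped BigOperators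
open Matrix

/-- differentiability of the determinant of a matrix-valued map -/
lemma aux_det_diff {n : ℕ} (M : (Fin n → ℝ) → Matrix (Fin n) (Fin n) ℝ)
    (hM : ∀ a b, Differentiable ℝ fun q => M q a b) :
    Differentiable ℝ fun q => (M q).det := by
  have : (fun q => (M q).det) = fun q => ∑ σ : Equiv.Perm (Fin n),
      ((Equiv.Perm.sign σ : ℤ) : ℝ) * ∏ i, M q (σ i) i := by
    funext q; rw [Matrix.det_apply]
    congr 1; funext σ
    simp [Units.smul_def, zsmul_eq_mul]
  rw [this]
  refine Differentiable.fun_sum fun σ _ => (differentiable_const _).mul ?_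
  exact fun x => (HasFDerivAt.finset_prod
    (fun k _ => ((hM (σ k) k) x).hasFDerivAt)).differentiableAt

/-- entries of the pointwise inverse are differentiable -/
lemma aux_inv_diff {n : ℕ} (γ : (Fin n → ℝ) → Matrix (Fin n) (Fin n) ℝ)
    (hγ : ∀ a b, Differentiable ℝ fun q => γ q a b)
    (hinv : ∀ p, IsUnit (γ p)) (a b : Fin n) :
    Differentiable ℝ fun q => (γ q)⁻¹ a b := by
  have hdet : ∀ q, (γ q).det ≠ 0 := fun q =>
    ((Matrix.isUnit_iff_isUnit_det _).mp (hinv q)).ne_zero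
  have hdd : Differentiable ℝ fun q => (γ q).det := aux_det_diff γ hγ
  have hrw : (fun q => (γ q)⁻¹ a b)
      = fun q => ((γ q).det)⁻¹ * ((γ q).updateRow b (Pi.single a 1)).det := by
    funext q
    rw [Matrix.inv_def, Matrix.smul_apply, Matrix.adjugate_apply, Ring.inverse_eq_inv',
      smul_eq_mul]
  rw [hrw]
  refine (hdd.inv hdet).mul (aux_det_diff _ fun c d => ?_)
  by_cases h : c = b
  · simpa [Matrix.updateRow_apply, h] using differentiable_const (Pi.single a 1 d : ℝ)
  · simpa [Matrix.updateRow_apply, h] using hγ c d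

/-- the purely algebraic contraction of the master equation -/
lemma aux_alg {n : ℕ} (g G : Matrix (Fin n) (Fin n) ℝ)
    (D : Fin n → Fin n → Fin n → ℝ) (f : Fin n → Fin n → Fin n → ℝ)
    (hgG : ∀ x y, ∑ m, g x m * G m y = if x = y then (1:ℝ) else 0)
    (hGg : ∀ x y, ∑ m, G x m * g m y = if x = y then (1:ℝ) else 0)
    (hmaster : ∀ k l m, (∑ s, g k s * D s l m) - (∑ s, g l s * D s k m)
      - ∑ s, f k l s * g s m = 0)
    (i j a : Fin n) :
    (-∑ l, ∑ m, G i l * (D j l m * G m a)) - (-∑ l, ∑ m, G j l * (D i l m * G m a))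
      + ∑ k, ∑ l, G j k * f k l a * G i l = 0 := by
  have contractL : ∀ (X : Fin n → ℝ) (x : Fin n),
      ∑ l, G x l * ∑ m, g l m * X m = X x := by
    intro X x
    calc ∑ l, G x l * ∑ m, g l m * X m
        = ∑ l, ∑ m, G x l * g l m * X m := by
          simp_rw [Finset.mul_sum, mul_assoc]
      _ = ∑ m, (∑ l, G x l * g l m) * X m := by
          rw [Finset.sum_comm]; simp_rw [Finset.sum_mul]
      _ = ∑ m, (if x = m then (1:ℝ) else 0) * X m := by simp_rw [hGg]
      _ = X x := by simp
  have contractR : ∀ (X : Fin n → ℝ) (y : Fin n),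
      ∑ m, (∑ s, X s * g s m) * G m y = X y := by
    intro X y
    calc ∑ m, (∑ s, X s * g s m) * G m y
        = ∑ m, ∑ s, X s * (g s m * G m y) := by
          simp_rw [Finset.sum_mul, mul_assoc]
      _ = ∑ s, X s * ∑ m, g s m * G m y := by
          rw [Finset.sum_comm]; simp_rw [Finset.mul_sum]
      _ = ∑ s, X s * (if s = y then (1:ℝ) else 0) := by simp_rw [hgG]
      _ = X y := by simp
  have F1 : ∀ (d l m : Fin n), D d l m = ∑ k, G d k * ∑ s, g k s * D s l m :=
    fun d l m => (contractL (fun s => D s l m) d).symm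
  have hS1 : ∑ l, ∑ m, G i l * (D j l m * G m a)
      = ∑ k, ∑ l, ∑ m, G j k * G i l * ((∑ s, g k s * D s l m) * G m a) := by
    calc ∑ l, ∑ m, G i l * (D j l m * G m a)
        = ∑ l, ∑ m, ∑ k, G j k * G i l * ((∑ s, g k s * D s l m) * G m a) := by
          refine Finset.sum_congr rfl fun l _ => Finset.sum_congr rfl fun m _ => ?_
          rw [F1 j l m, Finset.sum_mul, Finset.mul_sum]
          exact Finset.sum_congr rfl fun k _ => by ring
      _ = ∑ l, ∑ k, ∑ m, G j k * G i l * ((∑ s, g k s * D s l m) * G m a) := by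
          exact Finset.sum_congr rfl fun l _ => Finset.sum_comm
      _ = ∑ k, ∑ l, ∑ m, G j k * G i l * ((∑ s, g k s * D s l m) * G m a) :=
          Finset.sum_comm
  have hS2 : ∑ l, ∑ m, G j l * (D i l m * G m a)
      = ∑ k, ∑ l, ∑ m, G j k * G i l * ((∑ s, g l s * D s k m) * G m a) := by
    calc ∑ l, ∑ m, G j l * (D i l m * G m a)
        = ∑ l, ∑ m, ∑ k, G j l * G i k * ((∑ s, g k s * D s l m) * G m a) := by
          refine Finset.sum_congr rfl fun l _ => Finset.sum_congr rfl fun m _ => ?_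
          rw [F1 i l m, Finset.sum_mul, Finset.mul_sum]
          exact Finset.sum_congr rfl fun k _ => by ring
      _ = ∑ l, ∑ k, ∑ m, G j l * G i k * ((∑ s, g k s * D s l m) * G m a) := by
          exact Finset.sum_congr rfl fun l _ => Finset.sum_comm
      _ = ∑ k, ∑ l, ∑ m, G j l * G i k * ((∑ s, g k s * D s l m) * G m a) :=
          Finset.sum_comm
      _ = ∑ k, ∑ l, ∑ m, G j k * G i l * ((∑ s, g l s * D s k m) * G m a) :=
          Finset.sum_comm
  have main : (∑ l, ∑ m, G i l * (D j l m * G m a))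
      - (∑ l, ∑ m, G j l * (D i l m * G m a))
      = ∑ k, ∑ l, G j k * f k l a * G i l := by
    rw [hS1, hS2]
    calc (∑ k, ∑ l, ∑ m, G j k * G i l * ((∑ s, g k s * D s l m) * G m a))
        - (∑ k, ∑ l, ∑ m, G j k * G i l * ((∑ s, g l s * D s k m) * G m a))
        = ∑ k, ∑ l, ∑ m, G j k * G i l *
            (((∑ s, g k s * D s l m) - (∑ s, g l s * D s k m)) * G m a) := by
          rw [← Finset.sum_sub_distrib]
          refine Finset.sum_congr rfl fun k _ => ?_
          rw [← Finset.sum_sub_distrib]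
          refine Finset.sum_congr rfl fun l _ => ?_
          rw [← Finset.sum_sub_distrib]
          exact Finset.sum_congr rfl fun m _ => by ring
      _ = ∑ k, ∑ l, ∑ m, G j k * G i l * ((∑ s, f k l s * g s m) * G m a) := by
          refine Finset.sum_congr rfl fun k _ => Finset.sum_congr rfl fun l _ =>
            Finset.sum_congr rfl fun m _ => ?_
          have h := hmaster k l m
          have : (∑ s, g k s * D s l m) - (∑ s, g l s * D s k m)
              = ∑ s, f k l s * g s m := by linarith
          rw [this]
      _ = ∑ k, ∑ l, G j k * G i l * ∑ m, (∑ s, f k l s * g s m) * G m a := by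
          refine Finset.sum_congr rfl fun k _ => Finset.sum_congr rfl fun l _ => ?_
          rw [Finset.mul_sum]
      _ = ∑ k, ∑ l, G j k * G i l * f k l a := by
          refine Finset.sum_congr rfl fun k _ => Finset.sum_congr rfl fun l _ => ?_
          rw [contractR (fun s => f k l s) a]
      _ = ∑ k, ∑ l, G j k * f k l a * G i l := by
          refine Finset.sum_congr rfl fun k _ => Finset.sum_congr rfl fun l _ => by ring
  linarith [main]

theorem stmt_11 {n : ℕ} (f : Fin n → Fin n → Fin n → ℝ)
    (hf : ∀ a b c, f a b c = -f b a c)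
    (γ : (Fin n → ℝ) → Matrix (Fin n) (Fin n) ℝ)
    (hγ : ∀ a b, ContDiff ℝ (⊤ : ℕ∞) fun p => γ p a b)
    (hinv : ∀ p, IsUnit (γ p))
    (hmaster : ∀ (a b m : Fin n) (p : Fin n → ℝ),
      (∑ k, γ p a k * pd k (fun q => γ q b m) p) -
      (∑ k, γ p b k * pd k (fun q => γ q a m) p) -
      ∑ k, f a b k * γ p k m = 0) :
    ∀ (i j a : Fin n) (p : Fin n → ℝ),
      pd j (fun q => (γ q)⁻¹ i a) p - pd i (fun q => (γ q)⁻¹ j a) p +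
      ∑ k, ∑ l, (γ p)⁻¹ j k * f k l a * (γ p)⁻¹ i l = 0 := by
  classical
  have hdγ : ∀ a b, Differentiable ℝ fun q => γ q a b :=
    fun a b => (hγ a b).differentiable (by simp)
  have hdG : ∀ a b, Differentiable ℝ fun q => (γ q)⁻¹ a b :=
    aux_inv_diff γ hdγ hinv
  have hdet : ∀ q, IsUnit (γ q).det := fun q =>
    (Matrix.isUnit_iff_isUnit_det _).mp (hinv q)
  have hγG : ∀ (q : Fin n → ℝ) (x y : Fin n),
      ∑ m, γ q x m * (γ q)⁻¹ m y = if x = y then (1:ℝ) else 0 := by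
    intro q x y
    have h := congrFun (congrFun (Matrix.mul_nonsing_inv (γ q) (hdet q)) x) y
    simpa [Matrix.mul_apply, Matrix.one_apply] using h
  have hGγ : ∀ (q : Fin n → ℝ) (x y : Fin n),
      ∑ m, (γ q)⁻¹ x m * γ q m y = if x = y then (1:ℝ) else 0 := by
    intro q x y
    have h := congrFun (congrFun (Matrix.nonsing_inv_mul (γ q) (hdet q)) x) y
    simpa [Matrix.mul_apply, Matrix.one_apply] using h
  -- derivative of the identity γ * γ⁻¹ = 1
  have key : ∀ (l b s : Fin n) (p : Fin n → ℝ),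
      ∑ m, γ p l m * pd s (fun q => (γ q)⁻¹ m b) p
        = -∑ m, pd s (fun q => γ q l m) p * (γ p)⁻¹ m b := by
    intro l b s p
    have hC : (fun q => ∑ m, γ q l m * (γ q)⁻¹ m b)
        = fun _ => (if l = b then (1:ℝ) else 0) := by
      funext q; exact hγG q l b
    have hdiffs : ∀ m ∈ (Finset.univ : Finset (Fin n)),
        DifferentiableAt ℝ (fun q => γ q l m * (γ q)⁻¹ m b) p :=
      fun m _ => ((hdγ l m) p).mul ((hdG m b) p)
    have h0 : fderiv ℝ (fun q => ∑ m, γ q l m * (γ q)⁻¹ m b) p = 0 := by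
      rw [hC]; exact fderiv_const_apply _
    have hsum : (0:ℝ) = ∑ m, (γ p l m * pd s (fun q => (γ q)⁻¹ m b) p
        + (γ p)⁻¹ m b * pd s (fun q => γ q l m) p) := by
      have h1 : (0:ℝ) = fderiv ℝ (fun q => ∑ m, γ q l m * (γ q)⁻¹ m b) p
          (Pi.single s 1) := by rw [h0]; rfl
      rw [fderiv_fun_sum hdiffs, ContinuousLinearMap.sum_apply] at h1
      rw [h1]
      refine Finset.sum_congr rfl fun m _ => ?_
      rw [fderiv_fun_mul ((hdγ l m) p) ((hdG m b) p)]
      simp [pd]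
    rw [Finset.sum_add_distrib] at hsum
    have h2 : ∑ m, (γ p)⁻¹ m b * pd s (fun q => γ q l m) p
        = ∑ m, pd s (fun q => γ q l m) p * (γ p)⁻¹ m b :=
      Finset.sum_congr rfl fun m _ => mul_comm _ _
    linarith [hsum, h2]
  -- formula for the derivative of the inverse
  have pdinv : ∀ (s i b : Fin n) (p : Fin n → ℝ),
      pd s (fun q => (γ q)⁻¹ i b) p
        = -∑ l, ∑ m, (γ p)⁻¹ i l * (pd s (fun q => γ q l m) p * (γ p)⁻¹ m b) := by
    intro s i b p
    have contractL : ∀ (X : Fin n → ℝ) (x : Fin n),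
        ∑ l, (γ p)⁻¹ x l * ∑ m, γ p l m * X m = X x := by
      intro X x
      calc ∑ l, (γ p)⁻¹ x l * ∑ m, γ p l m * X m
          = ∑ l, ∑ m, (γ p)⁻¹ x l * γ p l m * X m := by
            simp_rw [Finset.mul_sum, mul_assoc]
        _ = ∑ m, (∑ l, (γ p)⁻¹ x l * γ p l m) * X m := by
            rw [Finset.sum_comm]; simp_rw [Finset.sum_mul]
        _ = ∑ m, (if x = m then (1:ℝ) else 0) * X m := by simp_rw [hGγ]
        _ = X x := by simp
    have h1 : pd s (fun q => (γ q)⁻¹ i b) p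
        = ∑ l, (γ p)⁻¹ i l * ∑ m, γ p l m * pd s (fun q => (γ q)⁻¹ m b) p :=
      (contractL (fun m => pd s (fun q => (γ q)⁻¹ m b) p) i).symm
    rw [h1, ← Finset.sum_neg_distrib]
    refine Finset.sum_congr rfl fun l _ => ?_
    rw [key l b s p, mul_neg, Finset.mul_sum]
  intro i j a p
  rw [pdinv j i a p, pdinv i j a p]
  exact aux_alg (γ p) ((γ p)⁻¹) (fun d l m => pd d (fun q => γ q l m) p) f
    (hγG p) (hGγ p) (fun k l m => hmaster k l m p) i j a
end

section
/- Let f^{ab}_c be real constants antisymmetric in the upper indices, γ : ℝ^n → M_n(ℝ) smooth, and equip functions on ℝ^{2n} (coordinates (x,p)) with the bracket {F,G} = Σ f^{ab}_c x^c ∂F/∂x^a · ∂G/∂x^b + Σ γ^a_b(p)(∂F/∂x^a · ∂G/∂p_b − ∂F/∂p_b · ∂G/∂x^a). Let Δ : ℝ^n → M_n(ℝ) be smooth and satisfy γ^c_d ∂_p^d Δ^b_a − f^{dc}_a Δ^b_d = 0 for all indices. Define s^a(x,p) = x^a and t^a(x,p) = Σ_b Δ^a_b(p) x^b. Then {t^a,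 s^b} = 0 for all a,b. If moreover Δ intertwines the structure constants, i.e. Σ_{c,d} Δ^a_c Δ^b_d f^{cd}_e = Σ_c f^{ab}_c Δ^c_e for all a,b,e, then {t^a, t^b} = −Σ_c f^{ab}_c t^c. -/
open scoped BigOperators

/-- the source map `s^a(x,p) = x^a`. -/
def srcMap {n : ℕ} (a : Fin n) (z : (Fin n → ℝ) × (Fin n → ℝ)) : ℝ := z.1 a

/-- the target map `t^a(x,p) = Σ_b Δ^a_b(p) x^b`. -/
noncomputable def tgtMap {n : ℕ} (Δ : (Fin n → ℝ) → Matrix (Fin n) (Fin n) ℝ)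
    (a : Fin n) (z : (Fin n → ℝ) × (Fin n → ℝ)) : ℝ :=
  ∑ b, Δ z.2 a b * z.1 b

section
variable {n : ℕ}

noncomputable def coordL (b : Fin n) : ((Fin n → ℝ) × (Fin n → ℝ)) →L[ℝ] ℝ :=
  (ContinuousLinearMap.proj b).comp (ContinuousLinearMap.fst ℝ (Fin n → ℝ) (Fin n → ℝ))

lemma src_hasFDeriv (b : Fin n) (z : (Fin n → ℝ) × (Fin n → ℝ)) :
    HasFDerivAt (srcMap b) (coordL b) z := (coordL b).hasFDerivAt

lemma pdx_src (i b : Fin n) (z : (Fin n → ℝ) × (Fin n → ℝ)) :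
    pdx i (srcMap b) z = (Pi.single i 1 : Fin n → ℝ) b := by
  simp [pdx, (src_hasFDeriv b z).fderiv, coordL]

lemma pdp_src (i b : Fin n) (z : (Fin n → ℝ) × (Fin n → ℝ)) :
    pdp i (srcMap b) z = 0 := by
  simp [pdp, (src_hasFDeriv b z).fderiv, coordL]

variable (Δ : (Fin n → ℝ) → Matrix (Fin n) (Fin n) ℝ)
  (hΔsmooth : ∀ a b, ContDiff ℝ (⊤ : ℕ∞) fun p => Δ p a b)

noncomputable def tgtL (a : Fin n) (z : (Fin n → ℝ) × (Fin n → ℝ)) :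
    ((Fin n → ℝ) × (Fin n → ℝ)) →L[ℝ] ℝ :=
  ∑ b, (z.1 b • ((fderiv ℝ (fun p => Δ p a b) z.2).comp
      (ContinuousLinearMap.snd ℝ (Fin n → ℝ) (Fin n → ℝ))) + Δ z.2 a b • coordL b)

include hΔsmooth in
lemma tgt_hasFDeriv (a : Fin n) (z : (Fin n → ℝ) × (Fin n → ℝ)) :
    HasFDerivAt (tgtMap Δ a) (tgtL Δ a z) z := by
  have : HasFDerivAt (fun z : (Fin n → ℝ) × (Fin n → ℝ) => ∑ b, Δ z.2 a b * z.1 b)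
      (tgtL Δ a z) z := by
    unfold tgtL
    apply HasFDerivAt.fun_sum
    intro b _
    have h1 : HasFDerivAt (fun z : (Fin n → ℝ) × (Fin n → ℝ) => Δ z.2 a b)
        ((fderiv ℝ (fun p => Δ p a b) z.2).comp
          (ContinuousLinearMap.snd ℝ (Fin n → ℝ) (Fin n → ℝ))) z :=
      (((hΔsmooth a b).differentiable (by simp)).differentiableAt.hasFDerivAt).comp z
        (hasFDerivAt_snd)
    have h2 : HasFDerivAt (fun z : (Fin n → ℝ) × (Fin n → ℝ) => z.1 b) (coordL b) z :=
      (coordL b).hasFDerivAt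
    simpa [add_comm] using h1.fun_mul h2
  exact this

include hΔsmooth in
lemma pdx_tgt (i a : Fin n) (z : (Fin n → ℝ) × (Fin n → ℝ)) :
    pdx i (tgtMap Δ a) z = Δ z.2 a i := by
  simp [pdx, (tgt_hasFDeriv Δ hΔsmooth a z).fderiv, tgtL, coordL, Pi.single_apply,
    mul_comm]

include hΔsmooth in
lemma pdp_tgt (i a : Fin n) (z : (Fin n → ℝ) × (Fin n → ℝ)) :
    pdp i (tgtMap Δ a) z = ∑ b, pd i (fun q => Δ q a b) z.2 * z.1 b := by
  simp [pdp, (tgt_hasFDeriv Δ hΔsmooth a z).fderiv, tgtL, coordL, pd, mul_comm]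

end

theorem stmt_12 {n : ℕ} (f : Fin n → Fin n → Fin n → ℝ)
    (hf : ∀ a b c, f a b c = -f b a c)
    (γ Δ : (Fin n → ℝ) → Matrix (Fin n) (Fin n) ℝ)
    (hγ : ∀ a b, ContDiff ℝ (⊤ : ℕ∞) fun p => γ p a b)
    (hΔsmooth : ∀ a b, ContDiff ℝ (⊤ : ℕ∞) fun p => Δ p a b)
    (hΔ : ∀ (a b c : Fin n) (p : Fin n → ℝ),
      (∑ d, γ p c d * pd d (fun q => Δ q b a) p) - ∑ d, f d c a * Δ p b d = 0) :
    (∀ (a b : Fin n) (z : (Fin n → ℝ) × (Fin n → ℝ)),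
      linBracket f γ (tgtMap Δ a) (srcMap b) z = 0) ∧
    ((∀ (a b e : Fin n) (p : Fin n → ℝ),
        ∑ c, ∑ d, Δ p a c * Δ p b d * f c d e = ∑ c, f a b c * Δ p c e) →
      ∀ (a b : Fin n) (z : (Fin n → ℝ) × (Fin n → ℝ)),
        linBracket f γ (tgtMap Δ a) (tgtMap Δ b) z = -∑ c, f a b c * tgtMap Δ c z) := by
  refine ⟨?_, ?_⟩
  ·
    intro a b z
    have key : ∀ (x c' e : Fin n), ∑ d, γ z.2 c' d * pd d (fun q => Δ q x e) z.2
        = ∑ d, f d c' e * Δ z.2 x d := by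
      intro x c' e
      have := hΔ e x c' z.2
      linarith
    simp only [linBracket, pdx_src, pdp_src, pdx_tgt Δ hΔsmooth, pdp_tgt Δ hΔsmooth,
      Pi.single_apply, mul_ite, mul_one, mul_zero, ite_mul, zero_mul, Finset.sum_ite_eq',
      Finset.mem_univ, if_true, zero_sub, mul_neg, sub_zero, Finset.sum_ite_irrel,
      Finset.sum_const_zero, Finset.sum_ite_eq, Finset.sum_neg_distrib]
    rw [add_neg_eq_zero]
    calc ∑ x, ∑ c, f x b c * z.1 c * Δ z.2 a x
        = ∑ c, (∑ x, f x b c * Δ z.2 a x) * z.1 c := by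
          rw [Finset.sum_comm]
          exact Finset.sum_congr rfl fun c _ => by
            rw [Finset.sum_mul]; exact Finset.sum_congr rfl fun x _ => by ring
      _ = ∑ c, (∑ x, γ z.2 b x * pd x (fun q => Δ q a c) z.2) * z.1 c :=
          Finset.sum_congr rfl fun c _ => by rw [key a b c]
      _ = ∑ x, γ z.2 b x * ∑ c, pd x (fun q => Δ q a c) z.2 * z.1 c := by
          simp only [Finset.sum_mul, Finset.mul_sum, mul_assoc]
          rw [Finset.sum_comm]
  · intro hint a b z
    have key : ∀ (x c' e : Fin n), ∑ d, γ z.2 c' d * pd d (fun q => Δ q x e) z.2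
        = ∑ d, f d c' e * Δ z.2 x d := by
      intro x c' e
      have := hΔ e x c' z.2
      linarith
    have inner : ∀ (x c' : Fin n),
        ∑ d, γ z.2 c' d * (∑ e, pd d (fun q => Δ q x e) z.2 * z.1 e)
        = ∑ e, (∑ d, f d c' e * Δ z.2 x d) * z.1 e := by
      intro x c'
      simp only [Finset.mul_sum]
      rw [Finset.sum_comm]
      refine Finset.sum_congr rfl fun e _ => ?_
      rw [← key x c' e, Finset.sum_mul]
      exact Finset.sum_congr rfl fun d _ => by ring
    have swap3 : ∀ g : Fin n → Fin n → Fin n → ℝ,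
        (∑ x, ∑ y, ∑ w, g x y w) = ∑ w, ∑ x, ∑ y, g x y w := by
      intro g
      rw [show (∑ x, ∑ y, ∑ w, g x y w) = ∑ x, ∑ w, ∑ y, g x y w from
        Finset.sum_congr rfl fun x _ => Finset.sum_comm]
      exact Finset.sum_comm
    set T : ℝ := ∑ e, z.1 e * ∑ c, ∑ d, Δ z.2 a c * Δ z.2 b d * f c d e with hT
    have A1 : (∑ x, ∑ x1, ∑ x2, f x x1 x2 * z.1 x2 * Δ z.2 a x * Δ z.2 b x1) = T := by
      rw [swap3]
      simp only [hT, Finset.mul_sum]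
      exact Finset.sum_congr rfl fun e _ => Finset.sum_congr rfl fun c _ =>
        Finset.sum_congr rfl fun d _ => by ring
    have A2 : (∑ x, Δ z.2 a x * ∑ e, (∑ d, f d x e * Δ z.2 b d) * z.1 e) = -T := by
      simp only [Finset.mul_sum, Finset.sum_mul, ← Finset.sum_neg_distrib, hT]
      rw [Finset.sum_comm]
      exact Finset.sum_congr rfl fun e _ => Finset.sum_congr rfl fun c _ =>
        Finset.sum_congr rfl fun d _ => by rw [hf d c e]; ring
    have A3 : (∑ x, Δ z.2 b x * ∑ e, (∑ d, f d x e * Δ z.2 a d) * z.1 e) = T := by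
      simp only [Finset.mul_sum, Finset.sum_mul, hT]
      rw [Finset.sum_comm]
      refine Finset.sum_congr rfl fun e _ => ?_
      rw [Finset.sum_comm]
      exact Finset.sum_congr rfl fun c _ => Finset.sum_congr rfl fun d _ => by ring
    have A4 : (∑ x, f a b x * ∑ e, Δ z.2 x e * z.1 e) = T := by
      simp only [Finset.mul_sum, hT]
      rw [Finset.sum_comm]
      refine Finset.sum_congr rfl fun e _ => ?_
      calc ∑ x, f a b x * (Δ z.2 x e * z.1 e)
          = (∑ x, f a b x * Δ z.2 x e) * z.1 e := by
            rw [Finset.sum_mul]; exact Finset.sum_congr rfl fun c _ => by ring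
        _ = (∑ c, ∑ d, Δ z.2 a c * Δ z.2 b d * f c d e) * z.1 e := by rw [hint a b e z.2]
        _ = ∑ x, ∑ i, z.1 e * (Δ z.2 a x * Δ z.2 b i * f x i e) := by
            rw [Finset.sum_mul]
            refine Finset.sum_congr rfl fun c _ => ?_
            rw [Finset.sum_mul]
            exact Finset.sum_congr rfl fun d _ => by ring
    have hG2 : ∀ x, (∑ x1, γ z.2 x x1 *
          (Δ z.2 a x * (∑ e, pd x1 (fun q => Δ q b e) z.2 * z.1 e) -
            (∑ e, pd x1 (fun q => Δ q a e) z.2 * z.1 e) * Δ z.2 b x))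
        = Δ z.2 a x * ∑ e, (∑ d, f d x e * Δ z.2 b d) * z.1 e
          - Δ z.2 b x * ∑ e, (∑ d, f d x e * Δ z.2 a d) * z.1 e := by
      intro x
      rw [← inner b x, ← inner a x, Finset.mul_sum, Finset.mul_sum,
        ← Finset.sum_sub_distrib]
      exact Finset.sum_congr rfl fun x1 _ => by ring
    simp only [linBracket, tgtMap, pdx_tgt Δ hΔsmooth, pdp_tgt Δ hΔsmooth]
    rw [Finset.sum_congr rfl fun x _ => hG2 x, Finset.sum_sub_distrib, A1, A2, A3, A4]
    ring
end

section
/- Let γ : ℝ^n → GL_n(ℝ) be smooth satisfying the first master equation γ^a_k ∂_p^k γ^b_m − γ^b_k ∂_p^k γ^a_m − γ^k_m f^{ab}_k = 0, where f^{ab}_c are real constants antisymmetric in the upper indices, and let ρ̄ : ℝ^n → M_n(ℝ) be smooth satisfying the commutation relation ρ̄^a_k ∂_p^k γ^b_m − γ^b_k ∂_p^k ρ̄^a_m = 0 for all indices. Then the matrix Δ defined by Δ^a_b(p) = Σ_c ρ̄^a_c(p) γ̄^c_b(p), where γ̄ = γ^{-1} pointwise, satisfies γ^c_d ∂_p^d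 Δ^b_a − f^{dc}_a Δ^b_d = 0 for all indices. -/
open scoped BigOperators
open Matrix

/-- the coadjoint matrix `Δ^a_b(p) = Σ_c ρ̄^a_c(p) γ̄^c_b(p)`, with `γ̄ = γ⁻¹` pointwise. -/
noncomputable def coadj {n : ℕ} (γ ρ : (Fin n → ℝ) → Matrix (Fin n) (Fin n) ℝ)
    (p : Fin n → ℝ) : Matrix (Fin n) (Fin n) ℝ :=
  fun a b => ∑ c, ρ p a c * (γ p)⁻¹ c b


section Aux
variable {n : ℕ}

lemma pd_sum {ι : Type*} (s : Finset ι) (F : ι → (Fin n → ℝ) → ℝ) (k : Fin n) (p : Fin n → ℝ)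
    (h : ∀ i ∈ s, DifferentiableAt ℝ (F i) p) :
    pd k (fun q => ∑ i ∈ s, F i q) p = ∑ i ∈ s, pd k (F i) p := by
  unfold pd
  rw [fderiv_fun_sum h]
  simp

lemma pd_mul (f g : (Fin n → ℝ) → ℝ) (k : Fin n) (p : Fin n → ℝ)
    (hf : DifferentiableAt ℝ f p) (hg : DifferentiableAt ℝ g p) :
    pd k (fun q => f q * g q) p = pd k f p * g p + f p * pd k g p := by
  unfold pd
  rw [fderiv_fun_mul hf hg]
  simp [smul_eq_mul]
  ring

lemma pd_const (c : ℝ) (k : Fin n) (p : Fin n → ℝ) : pd k (fun _ => c) p = 0 := by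
  unfold pd
  simp

lemma contDiff_det' (M : (Fin n → ℝ) → Matrix (Fin n) (Fin n) ℝ)
    (hM : ∀ a b, ContDiff ℝ (⊤ : ℕ∞) fun p => M p a b) :
    ContDiff ℝ (⊤ : ℕ∞) fun p => (M p).det := by
  simp only [Matrix.det_apply]
  apply ContDiff.sum
  intro σ _
  have h : ContDiff ℝ (⊤ : ℕ∞) fun p => ∏ i, M p (σ i) i := contDiff_prod (fun i _ => hM _ _)
  have e : (fun p => Equiv.Perm.sign σ • ∏ i, M p (σ i) i)
      = fun p => ((Equiv.Perm.sign σ : ℤ) : ℝ) * ∏ i, M p (σ i) i := by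
    funext p; simp [Units.smul_def, zsmul_eq_mul]
  rw [e]
  exact contDiff_const.mul h

lemma contDiff_inv_entry (γ : (Fin n → ℝ) → Matrix (Fin n) (Fin n) ℝ)
    (hγ : ∀ a b, ContDiff ℝ (⊤ : ℕ∞) fun p => γ p a b) (hinv : ∀ p, IsUnit (γ p))
    (a b : Fin n) : ContDiff ℝ (⊤ : ℕ∞) fun p => (γ p)⁻¹ a b := by
  have hdet : ContDiff ℝ (⊤ : ℕ∞) fun p => (γ p).det := contDiff_det' γ hγ
  have hdet0 : ∀ p, (γ p).det ≠ 0 := fun p =>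
    ((Matrix.isUnit_iff_isUnit_det _).mp (hinv p)).ne_zero
  have hadj : ContDiff ℝ (⊤ : ℕ∞) fun p => (γ p).adjugate a b := by
    simp only [Matrix.adjugate_apply]
    apply contDiff_det'
    intro x y
    by_cases hx : x = b
    · simp only [Matrix.updateRow_apply, if_pos hx]
      exact contDiff_const
    · simp only [Matrix.updateRow_apply, if_neg hx]
      exact hγ x y
  have e : (fun p => (γ p)⁻¹ a b) = fun p => ((γ p).det)⁻¹ * (γ p).adjugate a b := by
    funext p
    rw [Matrix.inv_def]
    simp [Ring.inverse_eq_inv, Matrix.smul_apply, smul_eq_mul]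
  rw [e]
  exact (hdet.inv hdet0).mul hadj

lemma sum4_swap {n : ℕ} (F : Fin n → Fin n → Fin n → Fin n → ℝ) :
    ∑ d, ∑ e, ∑ x, ∑ m, F d e x m = ∑ x, ∑ m, ∑ e, ∑ d, F d e x m := by
  calc ∑ d, ∑ e, ∑ x, ∑ m, F d e x m
      = ∑ d, ∑ x, ∑ e, ∑ m, F d e x m :=
        Finset.sum_congr rfl fun d _ => Finset.sum_comm
    _ = ∑ x, ∑ d, ∑ e, ∑ m, F d e x m := Finset.sum_comm
    _ = ∑ x, ∑ d, ∑ m, ∑ e, F d e x m :=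
        Finset.sum_congr rfl fun x _ => Finset.sum_congr rfl fun d _ => Finset.sum_comm
    _ = ∑ x, ∑ m, ∑ d, ∑ e, F d e x m :=
        Finset.sum_congr rfl fun x _ => Finset.sum_comm
    _ = ∑ x, ∑ m, ∑ e, ∑ d, F d e x m :=
        Finset.sum_congr rfl fun x _ => Finset.sum_congr rfl fun m _ => Finset.sum_comm

lemma key_alg {n : ℕ} (f : Fin n → Fin n → Fin n → ℝ)
    (hf : ∀ a b c, f a b c = -f b a c)
    (G GI R : Fin n → Fin n → ℝ) (Dγ Dρ DGI : Fin n → Fin n → Fin n → ℝ)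
    (h1 : ∀ x m, ∑ y, G x y * GI y m = if x = m then 1 else 0)
    (h2 : ∀ x m, ∑ y, GI x y * G y m = if x = m then 1 else 0)
    (hE : ∀ k x a, ∑ m, G x m * DGI k m a = -∑ m, Dγ k x m * GI m a)
    (hm : ∀ a b m, ∑ k, G a k * Dγ k b m = ∑ k, G b k * Dγ k a m + ∑ k, f a b k * G k m)
    (hc : ∀ a b m, ∑ k, R a k * Dγ k b m = ∑ k, G b k * Dρ k a m)
    (a b c : Fin n) :
    ∑ d, G c d * (∑ e, (Dρ d b e * GI e a + R b e * DGI d e a))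
      = ∑ d, f d c a * ∑ e, R b e * GI e d := by
  set Δ : Fin n → ℝ := fun d => ∑ e, R b e * GI e d with hΔ
  have hΔx : ∀ x, Δ x = ∑ e, R b e * GI e x := fun x => rfl
  clear_value Δ
  -- inverse derivative formula
  have hDGI : ∀ k e a', DGI k e a' = -∑ x, GI e x * ∑ m, Dγ k x m * GI m a' := by
    intro k e a'
    have step1 : ∑ m, (∑ x, GI e x * G x m) * DGI k m a' = DGI k e a' := by
      simp [h2, ite_mul]
    calc DGI k e a' = ∑ m, (∑ x, GI e x * G x m) * DGI k m a' := step1.symm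
      _ = ∑ x, GI e x * ∑ m, G x m * DGI k m a' := by
          simp only [Finset.sum_mul, Finset.mul_sum, mul_assoc]
          exact Finset.sum_comm
      _ = ∑ x, GI e x * -∑ m, Dγ k x m * GI m a' :=
          Finset.sum_congr rfl fun x _ => by rw [hE]
      _ = -∑ x, GI e x * ∑ m, Dγ k x m * GI m a' := by
          simp [mul_neg]
  -- Δ * G = R
  have hΔG : ∀ d, ∑ x, Δ x * G x d = R b d := by
    intro d
    calc ∑ x, Δ x * G x d = ∑ e, R b e * ∑ x, GI e x * G x d := by
          simp only [hΔx, Finset.sum_mul, Finset.mul_sum, mul_assoc]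
          exact Finset.sum_comm
      _ = R b d := by simp [h2, mul_ite]
  -- split LHS
  have split : ∑ d, G c d * (∑ e, (Dρ d b e * GI e a + R b e * DGI d e a))
      = (∑ d, G c d * ∑ e, Dρ d b e * GI e a) + ∑ d, G c d * ∑ e, R b e * DGI d e a := by
    rw [← Finset.sum_add_distrib]
    exact Finset.sum_congr rfl fun d _ => by rw [Finset.sum_add_distrib, mul_add]
  set S : ℝ := ∑ e, (∑ d, R b d * Dγ d c e) * GI e a with hS
  have hA : (∑ d, G c d * ∑ e, Dρ d b e * GI e a) = S := by
    calc ∑ d, G c d * ∑ e, Dρ d b e * GI e a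
        = ∑ e, (∑ d, G c d * Dρ d b e) * GI e a := by
          simp only [Finset.mul_sum, Finset.sum_mul, mul_assoc]
          exact Finset.sum_comm
      _ = S := by
          rw [hS]
          exact Finset.sum_congr rfl fun e _ => by rw [← hc b c e]
  set U : ℝ := ∑ x, ∑ m, Δ x * ((∑ d, G c d * Dγ d x m) * GI m a) with hU
  -- the expanded form of U, per (x, m)
  have inner : ∀ x m, Δ x * ((∑ d, G c d * Dγ d x m) * GI m a)
      = ∑ e, ∑ d, G c d * (R b e * (GI e x * (Dγ d x m * GI m a))) := by
    intro x m
    rw [hΔx]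
    calc (∑ e, R b e * GI e x) * ((∑ d, G c d * Dγ d x m) * GI m a)
        = ∑ e, (R b e * GI e x) * ((∑ d, G c d * Dγ d x m) * GI m a) := Finset.sum_mul ..
      _ = ∑ e, ∑ d, G c d * (R b e * (GI e x * (Dγ d x m * GI m a))) := by
          refine Finset.sum_congr rfl fun e _ => ?_
          rw [Finset.sum_mul, Finset.mul_sum]
          exact Finset.sum_congr rfl fun d _ => by ring
  have hB : (∑ d, G c d * ∑ e, R b e * DGI d e a) = -U := by
    calc ∑ d, G c d * ∑ e, R b e * DGI d e a
        = ∑ d, ∑ e, G c d * (R b e * DGI d e a) := by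
          simp only [Finset.mul_sum]
      _ = ∑ d, ∑ e, -∑ x, ∑ m, G c d * (R b e * (GI e x * (Dγ d x m * GI m a))) := by
          refine Finset.sum_congr rfl fun d _ => Finset.sum_congr rfl fun e _ => ?_
          rw [hDGI]
          simp only [mul_neg, Finset.mul_sum, neg_inj, mul_assoc]
      _ = -∑ d, ∑ e, ∑ x, ∑ m, G c d * (R b e * (GI e x * (Dγ d x m * GI m a))) := by
          simp [Finset.sum_neg_distrib]
      _ = -∑ x, ∑ m, ∑ e, ∑ d, G c d * (R b e * (GI e x * (Dγ d x m * GI m a))) := by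
          rw [sum4_swap]
      _ = -U := by
          rw [hU]
          refine neg_inj.mpr (Finset.sum_congr rfl fun x _ =>
            Finset.sum_congr rfl fun m _ => ?_).symm
          exact inner x m
  -- computing U : split by the master equation
  have hU1 : ∑ x, ∑ m, Δ x * ((∑ d, G x d * Dγ d c m) * GI m a) = S := by
    calc ∑ x, ∑ m, Δ x * ((∑ d, G x d * Dγ d c m) * GI m a)
        = ∑ m, ∑ x, Δ x * ((∑ d, G x d * Dγ d c m) * GI m a) := Finset.sum_comm
      _ = ∑ m, (∑ d, R b d * Dγ d c m) * GI m a := by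
          refine Finset.sum_congr rfl fun m _ => ?_
          calc ∑ x, Δ x * ((∑ d, G x d * Dγ d c m) * GI m a)
              = ∑ x, ∑ d, (Δ x * G x d) * (Dγ d c m * GI m a) := by
                refine Finset.sum_congr rfl fun x _ => ?_
                rw [Finset.sum_mul, Finset.mul_sum]
                exact Finset.sum_congr rfl fun d _ => by ring
            _ = ∑ d, ∑ x, (Δ x * G x d) * (Dγ d c m * GI m a) := Finset.sum_comm
            _ = ∑ d, (∑ x, Δ x * G x d) * (Dγ d c m * GI m a) := by
                simp only [Finset.sum_mul]
            _ = ∑ d, R b d * (Dγ d c m * GI m a) :=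
                Finset.sum_congr rfl fun d _ => by rw [hΔG]
            _ = (∑ d, R b d * Dγ d c m) * GI m a := by
                rw [Finset.sum_mul]
                exact Finset.sum_congr rfl fun d _ => by ring
      _ = S := hS.symm
  have hU2 : ∑ x, ∑ m, Δ x * ((∑ k, f c x k * G k m) * GI m a) = -∑ x, f x c a * Δ x := by
    calc ∑ x, ∑ m, Δ x * ((∑ k, f c x k * G k m) * GI m a)
        = ∑ x, Δ x * f c x a := by
          refine Finset.sum_congr rfl fun x _ => ?_
          calc ∑ m, Δ x * ((∑ k, f c x k * G k m) * GI m a)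
              = ∑ m, ∑ k, Δ x * (f c x k * (G k m * GI m a)) := by
                refine Finset.sum_congr rfl fun m _ => ?_
                rw [Finset.sum_mul, Finset.mul_sum]
                exact Finset.sum_congr rfl fun k _ => by ring
            _ = ∑ k, ∑ m, Δ x * (f c x k * (G k m * GI m a)) := Finset.sum_comm
            _ = ∑ k, Δ x * (f c x k * ∑ m, G k m * GI m a) := by
                simp only [Finset.mul_sum]
            _ = Δ x * f c x a := by
                simp [h1, mul_ite]
        _ = -∑ x, f x c a * Δ x := by
          rw [← Finset.sum_neg_distrib]
          refine Finset.sum_congr rfl fun x _ => ?_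
          rw [hf c x a]
          ring
  have hUval : U = S + -∑ x, f x c a * Δ x := by
    calc U = ∑ x, ∑ m, Δ x * ((∑ d, G x d * Dγ d c m) * GI m a)
            + ∑ x, ∑ m, Δ x * ((∑ k, f c x k * G k m) * GI m a) := by
          rw [hU, ← Finset.sum_add_distrib]
          refine Finset.sum_congr rfl fun x _ => ?_
          rw [← Finset.sum_add_distrib]
          refine Finset.sum_congr rfl fun m _ => ?_
          rw [hm c x m]
          ring
      _ = S + -∑ x, f x c a * Δ x := by rw [hU1, hU2]
  have hfin : ∑ x, f x c a * Δ x = ∑ d, f d c a * ∑ e, R b e * GI e d :=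
    Finset.sum_congr rfl fun x _ => by rw [hΔx]
  rw [split, hA, hB, hUval, ← hfin]
  ring


end Aux

theorem stmt_13 {n : ℕ} (f : Fin n → Fin n → Fin n → ℝ)
    (hf : ∀ a b c, f a b c = -f b a c)
    (γ ρ : (Fin n → ℝ) → Matrix (Fin n) (Fin n) ℝ)
    (hγ : ∀ a b, ContDiff ℝ (⊤ : ℕ∞) fun p => γ p a b)
    (hρ : ∀ a b, ContDiff ℝ (⊤ : ℕ∞) fun p => ρ p a b)
    (hinv : ∀ p, IsUnit (γ p))
    (hmaster : ∀ (a b m : Fin n) (p : Fin n → ℝ),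
      (∑ k, γ p a k * pd k (fun q => γ q b m) p) -
      (∑ k, γ p b k * pd k (fun q => γ q a m) p) -
      ∑ k, f a b k * γ p k m = 0)
    (hcomm : ∀ (a b m : Fin n) (p : Fin n → ℝ),
      (∑ k, ρ p a k * pd k (fun q => γ q b m) p) -
      ∑ k, γ p b k * pd k (fun q => ρ q a m) p = 0) :
    ∀ (a b c : Fin n) (p : Fin n → ℝ),
      (∑ d, γ p c d * pd d (fun q => coadj γ ρ q b a) p) -
      ∑ d, f d c a * coadj γ ρ p b d = 0 := by
  intro a b c p
  -- differentiability of the entries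
  have hγd : ∀ x y (q : Fin n → ℝ), DifferentiableAt ℝ (fun q => γ q x y) q :=
    fun x y q => ((hγ x y).differentiable (by simp)).differentiableAt
  have hρd : ∀ x y (q : Fin n → ℝ), DifferentiableAt ℝ (fun q => ρ q x y) q :=
    fun x y q => ((hρ x y).differentiable (by simp)).differentiableAt
  have hgi : ∀ x y, ContDiff ℝ (⊤ : ℕ∞) fun q => (γ q)⁻¹ x y := contDiff_inv_entry γ hγ hinv
  have hgid : ∀ x y (q : Fin n → ℝ), DifferentiableAt ℝ (fun q => (γ q)⁻¹ x y) q :=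
    fun x y q => ((hgi x y).differentiable (by simp)).differentiableAt
  -- inverse identities
  have hdet : ∀ q : Fin n → ℝ, IsUnit (γ q).det :=
    fun q => (Matrix.isUnit_iff_isUnit_det _).mp (hinv q)
  have h1 : ∀ (q : Fin n → ℝ) x m, ∑ y, γ q x y * (γ q)⁻¹ y m = if x = m then 1 else 0 := by
    intro q x m
    have := Matrix.mul_nonsing_inv (γ q) (hdet q)
    calc ∑ y, γ q x y * (γ q)⁻¹ y m = (γ q * (γ q)⁻¹) x m := (Matrix.mul_apply).symm
      _ = (1 : Matrix (Fin n) (Fin n) ℝ) x m := by rw [this]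
      _ = if x = m then 1 else 0 := Matrix.one_apply
  have h2 : ∀ x m, ∑ y, (γ p)⁻¹ x y * γ p y m = if x = m then 1 else 0 := by
    intro x m
    have := Matrix.nonsing_inv_mul (γ p) (hdet p)
    calc ∑ y, (γ p)⁻¹ x y * γ p y m = ((γ p)⁻¹ * γ p) x m := (Matrix.mul_apply).symm
      _ = (1 : Matrix (Fin n) (Fin n) ℝ) x m := by rw [this]
      _ = if x = m then 1 else 0 := Matrix.one_apply
  -- derivative of the inverse identity
  have hE : ∀ (k x w : Fin n),
      ∑ m, γ p x m * pd k (fun q => (γ q)⁻¹ m w) p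
        = -∑ m, pd k (fun q => γ q x m) p * (γ p)⁻¹ m w := by
    intro k x w
    have hconst : (fun q => ∑ m, γ q x m * (γ q)⁻¹ m w)
        = fun _ => (if x = w then (1:ℝ) else 0) := funext fun q => h1 q x w
    have h0 : pd k (fun q => ∑ m, γ q x m * (γ q)⁻¹ m w) p = 0 := by
      rw [hconst, pd_const]
    have hexp : pd k (fun q => ∑ m, γ q x m * (γ q)⁻¹ m w) p
        = ∑ m, (pd k (fun q => γ q x m) p * (γ p)⁻¹ m w
            + γ p x m * pd k (fun q => (γ q)⁻¹ m w) p) := by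
      rw [pd_sum (F := fun m q => γ q x m * (γ q)⁻¹ m w) _ _ _ (fun m _ => ((hγd x m p).mul (hgid m w p)))]
      exact Finset.sum_congr rfl fun m _ =>
        pd_mul _ _ _ _ (hγd x m p) (hgid m w p)
    rw [hexp, Finset.sum_add_distrib] at h0
    linarith [h0]
  -- derivative of coadj
  have hF1 : ∀ d : Fin n, pd d (fun q => coadj γ ρ q b a) p
      = ∑ e, (pd d (fun q => ρ q b e) p * (γ p)⁻¹ e a
          + ρ p b e * pd d (fun q => (γ q)⁻¹ e a) p) := by
    intro d
    have : (fun q => coadj γ ρ q b a) = fun q => ∑ e, ρ q b e * (γ q)⁻¹ e a := rfl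
    rw [this, pd_sum (F := fun e q => ρ q b e * (γ q)⁻¹ e a) _ _ _ (fun e _ => ((hρd b e p).mul (hgid e a p)))]
    exact Finset.sum_congr rfl fun e _ => pd_mul _ _ _ _ (hρd b e p) (hgid e a p)
  -- assemble
  have key := key_alg f hf (fun x y => γ p x y) (fun x y => (γ p)⁻¹ x y)
    (fun x y => ρ p x y)
    (fun k x y => pd k (fun q => γ q x y) p)
    (fun k x y => pd k (fun q => ρ q x y) p)
    (fun k x y => pd k (fun q => (γ q)⁻¹ x y) p)
    (fun x m => h1 p x m) h2 (fun k x a' => ?_) (fun a' b' m => ?_) (fun a' b' m => ?_) a b c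
  · rw [sub_eq_zero]
    calc ∑ d, γ p c d * pd d (fun q => coadj γ ρ q b a) p
        = ∑ d, γ p c d * ∑ e, (pd d (fun q => ρ q b e) p * (γ p)⁻¹ e a
            + ρ p b e * pd d (fun q => (γ q)⁻¹ e a) p) :=
          Finset.sum_congr rfl fun d _ => by rw [hF1 d]
      _ = ∑ d, f d c a * ∑ e, ρ p b e * (γ p)⁻¹ e d := key
      _ = ∑ d, f d c a * coadj γ ρ p b d := rfl
  · exact hE _ _ _
  · have h := hmaster a' b' m p
    linarith [h]
  · have h := hcomm a' b' m p
    linarith [h]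
end

section
/- Let Θ and F be antisymmetric real n×n matrices and γ an invertible real n×n matrix, with γ̄ = γ^{-1}, and assume I + Θ F is invertible. Then the 2n×2n block matrix Ω = [[F, −γ̄ᵀ],[γ̄, γ̄ Θ γ̄ᵀ]] is invertible with inverse [[B, C],[−Cᵀ, D]], where B = (I + Θ F)^{-1} Θ, C = (I + Θ F)^{-1} γ, and D = γᵀ (I + F Θ)^{-1} F γ. -/
open Matrix

theorem stmt_14 {n : ℕ} (Θ F γ : Matrix (Fin n) (Fin n) ℝ)
    (hΘ : Θᵀ = -Θ) (hF : Fᵀ = -F) (hγ : IsUnit γ)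
    (h : IsUnit (1 + Θ * F))
    (γb B C D : Matrix (Fin n) (Fin n) ℝ)
    (hγb : γb = γ⁻¹)
    (hB : B = (1 + Θ * F)⁻¹ * Θ)
    (hC : C = (1 + Θ * F)⁻¹ * γ)
    (hD : D = γᵀ * (1 + F * Θ)⁻¹ * F * γ) :
    Matrix.fromBlocks F (-γbᵀ) γb (γb * Θ * γbᵀ) *
      Matrix.fromBlocks B C (-Cᵀ) D = 1 ∧
    Matrix.fromBlocks B C (-Cᵀ) D *
      Matrix.fromBlocks F (-γbᵀ) γb (γb * Θ * γbᵀ) = 1 := by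
  have hγd : IsUnit γ.det := (Matrix.isUnit_iff_isUnit_det _).mp hγ
  have hγdt : IsUnit γᵀ.det := by rwa [Matrix.det_transpose]
  have had : IsUnit (1 + Θ * F).det := (Matrix.isUnit_iff_isUnit_det _).mp h
  have hat : (1 + Θ * F)ᵀ = 1 + F * Θ := by
    rw [Matrix.transpose_add, Matrix.transpose_one, Matrix.transpose_mul, hΘ, hF]
    simp
  have had' : IsUnit (1 + F * Θ).det := by
    rw [← hat, Matrix.det_transpose]; exact had
  have key1 : F * (1 + Θ * F)⁻¹ = (1 + F * Θ)⁻¹ * F := by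
    have e : (1 + F * Θ) * F * (1 + Θ * F)⁻¹
        = F * ((1 + Θ * F) * (1 + Θ * F)⁻¹) := by noncomm_ring
    calc F * (1 + Θ * F)⁻¹
        = ((1 + F * Θ)⁻¹ * (1 + F * Θ)) * (F * (1 + Θ * F)⁻¹) := by
          rw [Matrix.nonsing_inv_mul _ had', one_mul]
      _ = (1 + F * Θ)⁻¹ * ((1 + F * Θ) * F * (1 + Θ * F)⁻¹) := by noncomm_ring
      _ = (1 + F * Θ)⁻¹ * (F * ((1 + Θ * F) * (1 + Θ * F)⁻¹)) := by rw [e]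
      _ = (1 + F * Θ)⁻¹ * F := by rw [Matrix.mul_nonsing_inv _ had, mul_one]
  have key2 : (1 + Θ * F)⁻¹ * Θ = Θ * (1 + F * Θ)⁻¹ := by
    have e : (1 + Θ * F)⁻¹ * ((1 + Θ * F) * Θ * (1 + F * Θ)⁻¹)
        = ((1 + Θ * F)⁻¹ * (1 + Θ * F)) * Θ * (1 + F * Θ)⁻¹ := by noncomm_ring
    calc (1 + Θ * F)⁻¹ * Θ
        = (1 + Θ * F)⁻¹ * Θ * ((1 + F * Θ) * (1 + F * Θ)⁻¹) := by
          rw [Matrix.mul_nonsing_inv _ had', mul_one]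
      _ = (1 + Θ * F)⁻¹ * ((1 + Θ * F) * Θ * (1 + F * Θ)⁻¹) := by noncomm_ring
      _ = ((1 + Θ * F)⁻¹ * (1 + Θ * F)) * Θ * (1 + F * Θ)⁻¹ := by rw [e]
      _ = Θ * (1 + F * Θ)⁻¹ := by rw [Matrix.nonsing_inv_mul _ had, one_mul]
  have hCt : Cᵀ = γᵀ * (1 + F * Θ)⁻¹ := by
    rw [hC, Matrix.transpose_mul, Matrix.transpose_nonsing_inv, hat]
  have hγbt : γbᵀ = (γᵀ)⁻¹ := by rw [hγb, Matrix.transpose_nonsing_inv]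
  have h11 : F * B + -γbᵀ * -Cᵀ = 1 := by
    rw [hB, hγbt, hCt, neg_mul_neg, ← mul_assoc F, key1,
      ← mul_assoc, Matrix.nonsing_inv_mul _ hγdt, one_mul]
    calc (1 + F * Θ)⁻¹ * F * Θ + (1 + F * Θ)⁻¹
        = (1 + F * Θ)⁻¹ * (1 + F * Θ) := by noncomm_ring
      _ = 1 := Matrix.nonsing_inv_mul _ had'
  have h12 : F * C + -γbᵀ * D = 0 := by
    rw [hC, hγbt, hD, ← mul_assoc F, key1]
    have : (γᵀ)⁻¹ * (γᵀ * (1 + F * Θ)⁻¹ * F * γ)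
        = ((γᵀ)⁻¹ * γᵀ) * ((1 + F * Θ)⁻¹ * F * γ) := by noncomm_ring
    rw [neg_mul, this, Matrix.nonsing_inv_mul _ hγdt, one_mul]
    noncomm_ring
  have h21 : γb * B + γb * Θ * γbᵀ * -Cᵀ = 0 := by
    rw [hB, hγbt, hγb, hCt, key2]
    have e : γ⁻¹ * (Θ * (1 + F * Θ)⁻¹) + γ⁻¹ * Θ * γᵀ⁻¹ * -(γᵀ * (1 + F * Θ)⁻¹)
        = γ⁻¹ * Θ * (1 - γᵀ⁻¹ * γᵀ) * (1 + F * Θ)⁻¹ := by noncomm_ring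
    rw [e, Matrix.nonsing_inv_mul _ hγdt, sub_self]
    noncomm_ring
  have h22 : γb * C + γb * Θ * γbᵀ * D = 1 := by
    rw [hC, hγbt, hγb, hD]
    have e1 : γ⁻¹ * Θ * (γᵀ)⁻¹ * (γᵀ * (1 + F * Θ)⁻¹ * F * γ)
        = γ⁻¹ * (Θ * (1 + F * Θ)⁻¹) * (F * γ)
          + γ⁻¹ * Θ * ((γᵀ)⁻¹ * γᵀ - 1) * ((1 + F * Θ)⁻¹ * F * γ) := by
      noncomm_ring
    rw [e1, Matrix.nonsing_inv_mul _ hγdt, sub_self, ← key2]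
    calc γ⁻¹ * ((1 + Θ * F)⁻¹ * γ) + (γ⁻¹ * ((1 + Θ * F)⁻¹ * Θ) * (F * γ)
          + γ⁻¹ * Θ * 0 * ((1 + F * Θ)⁻¹ * F * γ))
        = γ⁻¹ * ((1 + Θ * F)⁻¹ * (1 + Θ * F)) * γ := by noncomm_ring
      _ = 1 := by rw [Matrix.nonsing_inv_mul _ had, mul_one, Matrix.nonsing_inv_mul _ hγd]
  have first : Matrix.fromBlocks F (-γbᵀ) γb (γb * Θ * γbᵀ) *
      Matrix.fromBlocks B C (-Cᵀ) D = 1 := by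
    rw [Matrix.fromBlocks_multiply, h11, h12, h21, h22, Matrix.fromBlocks_one]
  exact ⟨first, mul_eq_one_comm.mp first⟩
end

section
/- Let F, Ξ be real n×n matrices and Γ an invertible real n×n matrix, with Γ̄ = Γ^{-1}. Set G = Γ̄ᵀ F Γ̄ and assume I + G Ξ is invertible. Define F̂ = (I + G Ξ)^{-1} G and Ξ̂ = Γ̄ Ξ Γ̄ᵀ. Then I − Γᵀ F̂ Γ Ξ̂ is invertible and F = (I − Γᵀ F̂ Γ Ξ̂)^{-1} Γᵀ F̂ Γ. -/
open Matrix

theorem stmt_16 {n : ℕ} (F Ξ Γ : Matrix (Fin n) (Fin n) ℝ)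
    (hΓ : IsUnit Γ)
    (G Fhat Ξhat : Matrix (Fin n) (Fin n) ℝ)
    (hG : G = (Γ⁻¹)ᵀ * F * Γ⁻¹)
    (hunit : IsUnit (1 + G * Ξ))
    (hFhat : Fhat = (1 + G * Ξ)⁻¹ * G)
    (hΞhat : Ξhat = Γ⁻¹ * Ξ * (Γ⁻¹)ᵀ) :
    IsUnit (1 - Γᵀ * Fhat * Γ * Ξhat) ∧
    F = (1 - Γᵀ * Fhat * Γ * Ξhat)⁻¹ * (Γᵀ * Fhat * Γ) := by
  set A := 1 + G * Ξ with hA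
  have hΓd : IsUnit Γ.det := (Matrix.isUnit_iff_isUnit_det Γ).mp hΓ
  have hAd : IsUnit A.det := (Matrix.isUnit_iff_isUnit_det A).mp hunit
  have hΓT : IsUnit Γᵀ := (Matrix.isUnit_iff_isUnit_det _).mpr (by rwa [Matrix.det_transpose])
  have hΓΓi : Γ * Γ⁻¹ = 1 := Matrix.mul_nonsing_inv Γ hΓd
  have hΓiΓ : Γ⁻¹ * Γ = 1 := Matrix.nonsing_inv_mul Γ hΓd
  have hAAi : A * A⁻¹ = 1 := Matrix.mul_nonsing_inv A hAd
  have hAiA : A⁻¹ * A = 1 := Matrix.nonsing_inv_mul A hAd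
  have hTi : (Γ⁻¹)ᵀ = (Γᵀ)⁻¹ := Matrix.transpose_nonsing_inv Γ
  have hΓTΓTi : Γᵀ * (Γᵀ)⁻¹ = 1 :=
    Matrix.mul_nonsing_inv _ ((Matrix.isUnit_iff_isUnit_det _).mp hΓT)
  have hΓTiΓT : (Γᵀ)⁻¹ * Γᵀ = 1 :=
    Matrix.nonsing_inv_mul _ ((Matrix.isUnit_iff_isUnit_det _).mp hΓT)
  have h2 : A⁻¹ * (G * Ξ) = 1 - A⁻¹ := by
    have h3 : A⁻¹ * A = A⁻¹ + A⁻¹ * (G * Ξ) := by rw [hA]; noncomm_ring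
    rw [hAiA] at h3
    rw [eq_sub_iff_add_eq, add_comm]
    exact h3.symm
  have hkey : 1 - Γᵀ * Fhat * Γ * Ξhat = Γᵀ * A⁻¹ * (Γᵀ)⁻¹ := by
    have h1 : Γᵀ * Fhat * Γ * Ξhat = Γᵀ * (A⁻¹ * (G * Ξ)) * (Γᵀ)⁻¹ := by
      rw [hFhat, hΞhat, hTi,
        show Γᵀ * (A⁻¹ * G) * Γ * (Γ⁻¹ * Ξ * (Γᵀ)⁻¹)
          = Γᵀ * A⁻¹ * G * (Γ * Γ⁻¹) * Ξ * (Γᵀ)⁻¹ by noncomm_ring,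
        hΓΓi, mul_one]
      noncomm_ring
    rw [h1, h2, show Γᵀ * (1 - A⁻¹) * (Γᵀ)⁻¹ = Γᵀ * (Γᵀ)⁻¹ - Γᵀ * A⁻¹ * (Γᵀ)⁻¹
      by noncomm_ring, hΓTΓTi, sub_sub_cancel]
  have hUnit2 : IsUnit (1 - Γᵀ * Fhat * Γ * Ξhat) := by
    rw [hkey]
    have hu1 : IsUnit (A⁻¹) :=
      (Matrix.isUnit_iff_isUnit_det _).mpr (Matrix.isUnit_nonsing_inv_det A hAd)
    have hu2 : IsUnit ((Γᵀ)⁻¹) :=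
      (Matrix.isUnit_iff_isUnit_det _).mpr
        (Matrix.isUnit_nonsing_inv_det _ ((Matrix.isUnit_iff_isUnit_det _).mp hΓT))
    exact (hΓT.mul hu1).mul hu2
  refine ⟨hUnit2, ?_⟩
  have hinv : (1 - Γᵀ * Fhat * Γ * Ξhat)⁻¹ = Γᵀ * A * (Γᵀ)⁻¹ := by
    apply Matrix.inv_eq_left_inv
    rw [hkey, show Γᵀ * A * (Γᵀ)⁻¹ * (Γᵀ * A⁻¹ * (Γᵀ)⁻¹)
        = Γᵀ * A * ((Γᵀ)⁻¹ * Γᵀ) * A⁻¹ * (Γᵀ)⁻¹ by noncomm_ring,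
      hΓTiΓT, mul_one,
      show Γᵀ * A * A⁻¹ * (Γᵀ)⁻¹ = Γᵀ * (A * A⁻¹) * (Γᵀ)⁻¹ by noncomm_ring,
      hAAi, mul_one, hΓTΓTi]
  rw [hinv, hFhat, hG, hTi,
    show Γᵀ * A * (Γᵀ)⁻¹ * (Γᵀ * (A⁻¹ * ((Γᵀ)⁻¹ * F * Γ⁻¹)) * Γ)
      = Γᵀ * A * ((Γᵀ)⁻¹ * Γᵀ) * A⁻¹ * (Γᵀ)⁻¹ * F * (Γ⁻¹ * Γ) by noncomm_ring,
    hΓTiΓT, hΓiΓ, mul_one, mul_one,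
    show Γᵀ * A * A⁻¹ * (Γᵀ)⁻¹ * F = Γᵀ * (A * A⁻¹) * (Γᵀ)⁻¹ * F by noncomm_ring,
    hAAi, mul_one, hΓTΓTi, one_mul]
end
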